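/- arXiv:2111.08093 — 9 statements merged into one kernel-verified Lean document; each statement's English description precedes it below -/
import Mathlib

section
/- Let p ≥ 2 be an integer, 0 < λ₁ ≤ λ₂, x ∈ H, and y₁, y₂ ∈ H with x − yᵢ ∈ λᵢ • A(yᵢ) for i = 1, 2. Writing φ(λᵢ, x) = λᵢ^{1/(p−1)}‖x − yᵢ‖, one has (λ₂/λ₁)^{1/(p−1)} φ(λ₁, x) ≤ φ(λ₂, x) ≤ (λ₂/λ₁)^{p/(p−1)} φ(λ₁, x). Moreover, for any fixed λ > 0 and any y with x − y ∈ λ • A(y), one has ‖x − y‖ = 0 if and only if 0 ∈ A x. -/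
/-!
Write `a = x - y₁`, `b = x - y₂`. Since `λ₁⁻¹ a ∈ A y₁` and `λ₂⁻¹ b ∈ A y₂`, monotonicity
(scaled by `λ₁ λ₂`) gives `0 ≤ ⟪λ₂ a - λ₁ b, b - a⟫`, and Cauchy–Schwarz turns this into
`(‖a‖ - ‖b‖) (λ₂ ‖a‖ - λ₁ ‖b‖) ≤ 0`. For `λ₁ ≤ λ₂` both factors must then have opposite
signs, which forces `‖a‖ ≤ ‖b‖` and `λ₁ ‖b‖ ≤ λ₂ ‖a‖`; multiplying by `λ₂^{1/(p-1)}` gives the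
two bounds on `φ`. The case `0 ∈ A x` is monotonicity against the pair `(y, λ⁻¹ (x - y))`.
-/

open scoped Pointwise
open RealInnerProductSpace

lemma mul_norm_sub_nonpos_of_inner_nonneg {H : Type*} [NormedAddCommGroup H]
    [InnerProductSpace ℝ H] {c d : ℝ} (hc : 0 ≤ c) (hd : 0 ≤ d) {a b : H}
    (h : 0 ≤ ⟪d • a - c • b, b - a⟫) :
    (‖a‖ - ‖b‖) * (d * ‖a‖ - c * ‖b‖) ≤ 0 := by
  have hexpand : ⟪d • a - c • b, b - a⟫ = (c + d) * ⟪a, b⟫ - d * ‖a‖ ^ 2 - c * ‖b‖ ^ 2 := by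
    simp only [inner_sub_left, inner_sub_right, real_inner_smul_left,
      real_inner_self_eq_norm_sq, real_inner_comm b a]
    ring
  have hcs := mul_le_mul_of_nonneg_left (real_inner_le_norm a b) (add_nonneg hc hd)
  nlinarith

lemma le_and_mul_le_of_mul_sub_nonpos {l₁ l₂ s t : ℝ} (hl₁ : 0 < l₁) (hl₁₂ : l₁ ≤ l₂)
    (ht : 0 ≤ t) (h : (s - t) * (l₂ * s - l₁ * t) ≤ 0) :
    s ≤ t ∧ l₁ * t ≤ l₂ * s := by
  constructor
  · by_contra! hts
    have : 0 < l₂ * s - l₁ * t := by nlinarith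
    nlinarith
  · by_contra! hst
    have : s < t := by nlinarith
    nlinarith

section MonotoneOperator

variable {H : Type*} [NormedAddCommGroup H] [InnerProductSpace ℝ H] {A : H → Set H}

lemma inv_smul_mem_of_sub_mem_smul {lam : ℝ} (hlam : 0 < lam) {x y : H}
    (hy : x - y ∈ lam • A y) : lam⁻¹ • (x - y) ∈ A y :=
  (Set.mem_smul_set_iff_inv_smul_mem₀ hlam.ne' _ _).1 hy

variable (hmono : ∀ x y u v : H, u ∈ A x → v ∈ A y → 0 ≤ ⟪u - v, x - y⟫)
include hmono

lemma norm_sub_resolvent_le_and_mul_le {lam₁ lam₂ : ℝ} (hlam₁ : 0 < lam₁)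
    (hlam₁₂ : lam₁ ≤ lam₂) {x y₁ y₂ : H}
    (hy₁ : x - y₁ ∈ lam₁ • A y₁) (hy₂ : x - y₂ ∈ lam₂ • A y₂) :
    ‖x - y₁‖ ≤ ‖x - y₂‖ ∧ lam₁ * ‖x - y₂‖ ≤ lam₂ * ‖x - y₁‖ := by
  have hlam₂ : 0 < lam₂ := hlam₁.trans_le hlam₁₂
  have hmon := hmono y₁ y₂ _ _ (inv_smul_mem_of_sub_mem_smul hlam₁ hy₁)
    (inv_smul_mem_of_sub_mem_smul hlam₂ hy₂)
  have hscaled : (lam₁ * lam₂) • (lam₁⁻¹ • (x - y₁) - lam₂⁻¹ • (x - y₂))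
      = lam₂ • (x - y₁) - lam₁ • (x - y₂) := by
    rw [smul_sub, smul_smul, smul_smul, mul_inv_cancel_right₀ hlam₂.ne',
      mul_right_comm, mul_inv_cancel₀ hlam₁.ne', one_mul]
  have hinner : 0 ≤ ⟪lam₂ • (x - y₁) - lam₁ • (x - y₂), (x - y₂) - (x - y₁)⟫ := by
    rw [← hscaled, real_inner_smul_left, sub_sub_sub_cancel_left]
    exact mul_nonneg (mul_pos hlam₁ hlam₂).le hmon
  exact le_and_mul_le_of_mul_sub_nonpos hlam₁ hlam₁₂ (norm_nonneg _)
    (mul_norm_sub_nonpos_of_inner_nonneg hlam₁.le hlam₂.le hinner)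

lemma resolvent_eq_self_iff {lam : ℝ} (hlam : 0 < lam) {x y : H}
    (hy : x - y ∈ lam • A y) : y = x ↔ 0 ∈ A x := by
  have hmem := inv_smul_mem_of_sub_mem_smul hlam hy
  constructor
  · rintro rfl
    simpa using hmem
  · intro hzero
    have hmon := hmono x y 0 _ hzero hmem
    rw [zero_sub, inner_neg_left, real_inner_smul_left, real_inner_self_eq_norm_sq] at hmon
    have hnorm : ‖x - y‖ ^ 2 = 0 := by
      nlinarith [inv_pos.2 hlam, sq_nonneg ‖x - y‖]
    exact (norm_sub_eq_zero_iff.1 (pow_eq_zero_iff two_ne_zero |>.1 hnorm)).symm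

end MonotoneOperator

lemma rpow_mul_bounds_of_le_of_mul_le {l₁ l₂ s t : ℝ} (hl₁ : 0 < l₁) (hl₂ : 0 < l₂)
    (hst : s ≤ t) (hts : l₁ * t ≤ l₂ * s) (q : ℝ) (hq : 1 + q ≠ 0) :
    (l₂ / l₁) ^ q * (l₁ ^ q * s) ≤ l₂ ^ q * t
      ∧ l₂ ^ q * t ≤ (l₂ / l₁) ^ (1 + q) * (l₁ ^ q * s) := by
  have hratio : (l₂ / l₁) ^ q * l₁ ^ q = l₂ ^ q := by
    rw [Real.div_rpow hl₂.le hl₁.le, div_mul_cancel₀ _ (Real.rpow_pos_of_pos hl₁ q).ne']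
  have hl₂q : 0 ≤ l₂ ^ q := (Real.rpow_pos_of_pos hl₂ q).le
  have ht : t ≤ l₂ / l₁ * s := by
    rw [div_mul_eq_mul_div, le_div_iff₀ hl₁]
    linarith
  constructor
  · rw [← mul_assoc, hratio]
    exact mul_le_mul_of_nonneg_left hst hl₂q
  · calc l₂ ^ q * t ≤ l₂ ^ q * (l₂ / l₁ * s) := mul_le_mul_of_nonneg_left ht hl₂q
      _ = l₂ / l₁ * ((l₂ / l₁) ^ q * l₁ ^ q) * s := by rw [hratio]; ring
      _ = (l₂ / l₁) ^ (1 + q) * (l₁ ^ q * s) := by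
        rw [Real.rpow_one_add' (div_pos hl₂ hl₁).le hq]; ring

theorem stmt_1_general {H : Type*} [NormedAddCommGroup H] [InnerProductSpace ℝ H]
    (A : H → Set H)
    (hmono : ∀ x y u v : H, u ∈ A x → v ∈ A y → 0 ≤ ⟪u - v, x - y⟫)
    (p : ℕ) (hp : 2 ≤ p)
    (lam₁ lam₂ : ℝ) (hlam₁ : 0 < lam₁) (hlam₁₂ : lam₁ ≤ lam₂)
    (x y₁ y₂ : H)
    (hy₁ : x - y₁ ∈ lam₁ • A y₁) (hy₂ : x - y₂ ∈ lam₂ • A y₂) :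
    ((lam₂ / lam₁) ^ (1 / ((p : ℝ) - 1)) * (lam₁ ^ (1 / ((p : ℝ) - 1)) * ‖x - y₁‖)
        ≤ lam₂ ^ (1 / ((p : ℝ) - 1)) * ‖x - y₂‖
      ∧ lam₂ ^ (1 / ((p : ℝ) - 1)) * ‖x - y₂‖
        ≤ (lam₂ / lam₁) ^ ((p : ℝ) / ((p : ℝ) - 1)) * (lam₁ ^ (1 / ((p : ℝ) - 1)) * ‖x - y₁‖))
    ∧ (∀ lam : ℝ, 0 < lam → ∀ y : H, x - y ∈ lam • A y → (‖x - y‖ = 0 ↔ 0 ∈ A x)) := by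
  have hp1 : (0 : ℝ) < p - 1 := by
    have : (2 : ℝ) ≤ p := by exact_mod_cast hp
    linarith
  have hexp : (p : ℝ) / (p - 1) = 1 + 1 / (p - 1) := by field_simp; ring
  obtain ⟨hle, hmul⟩ := norm_sub_resolvent_le_and_mul_le hmono hlam₁ hlam₁₂ hy₁ hy₂
  refine ⟨?_, fun lam hlam y hy => ?_⟩
  · rw [hexp]
    exact rpow_mul_bounds_of_le_of_mul_le hlam₁ (hlam₁.trans_le hlam₁₂) hle hmul _
      (by rw [← hexp]; positivity)
  · rw [norm_sub_eq_zero_iff, eq_comm]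
    exact resolvent_eq_self_iff hmono hlam hy

/-- Monotonicity bounds for `φ(λ, x) = λ^{1/(p-1)} ‖x - (I + λA)⁻¹x‖`
in `λ`, and `φ(λ, x) = 0` iff `0 ∈ A x`. -/
theorem stmt_1 {H : Type*} [NormedAddCommGroup H] [InnerProductSpace ℝ H] [CompleteSpace H]
    (A : H → Set H)
    (hmono : ∀ x y u v : H, u ∈ A x → v ∈ A y → 0 ≤ ⟪u - v, x - y⟫)
    (p : ℕ) (hp : 2 ≤ p)
    (lam₁ lam₂ : ℝ) (hlam₁ : 0 < lam₁) (hlam₁₂ : lam₁ ≤ lam₂)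
    (x y₁ y₂ : H)
    (hy₁ : x - y₁ ∈ lam₁ • A y₁) (hy₂ : x - y₂ ∈ lam₂ • A y₂) :
    ((lam₂ / lam₁) ^ (1 / ((p : ℝ) - 1)) * (lam₁ ^ (1 / ((p : ℝ) - 1)) * ‖x - y₁‖)
        ≤ lam₂ ^ (1 / ((p : ℝ) - 1)) * ‖x - y₂‖
      ∧ lam₂ ^ (1 / ((p : ℝ) - 1)) * ‖x - y₂‖
        ≤ (lam₂ / lam₁) ^ ((p : ℝ) / ((p : ℝ) - 1)) * (lam₁ ^ (1 / ((p : ℝ) - 1)) * ‖x - y₁‖))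
    ∧ (∀ lam : ℝ, 0 < lam → ∀ y : H, x - y ∈ lam • A y → (‖x - y‖ = 0 ↔ 0 ∈ A x)) :=
  stmt_1_general A hmono p hp lam₁ lam₂ hlam₁ hlam₁₂ x y₁ y₂ hy₁ hy₂
end

section
/- Let p ≥ 2 be an integer, fix x ∈ H with 0 ∉ A x, and suppose y : (0, ∞) → H satisfies x − y(λ) ∈ λ • A(y(λ)) for every λ > 0. Define φ : [0, ∞) → [0, ∞) by φ(λ) = λ^{1/(p−1)}‖x − y(λ)‖ for λ > 0 and φ(0) = 0. Then φ is continuous on [0, ∞), strictly increasing, and φ(λ) → +∞ as λ → +∞. -/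
open scoped Pointwise
open RealInnerProductSpace Filter Topology Set Metric

/-!
Write `u λ = x - y λ`, so that `λ⁻¹ • u λ ∈ A (y λ)`. Monotonicity of `A` at `y l` and `y m`,
combined with Cauchy–Schwarz, gives `(‖u m‖ - ‖u l‖) * (m ‖u l‖ - l ‖u m‖) ≥ 0`, hence for
`l < m` both `‖u l‖ ≤ ‖u m‖` and `‖u m‖ / m ≤ ‖u l‖ / l`. Since `‖u λ‖ > 0` (as `0 ∉ A x`), the
first makes `φ λ = λ ^ (1/(p-1)) ‖u λ‖` strictly increasing and unbounded, and bounds `‖u‖` near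
`0`, which gives continuity at `0`; the two together squeeze `‖u μ‖` between `‖u λ‖` and
`(μ / λ) ‖u λ‖`, which gives continuity at `λ > 0`.
-/

def IsMonotoneOperator {H : Type*} [NormedAddCommGroup H] [InnerProductSpace ℝ H]
    (A : H → Set H) : Prop :=
  ∀ x y u v : H, u ∈ A x → v ∈ A y → 0 ≤ ⟪u - v, x - y⟫

theorem le_and_mul_le_mul_of_mul_nonneg {l m a b : ℝ} (hl : 0 < l) (hlm : l < m) (ha : 0 ≤ a)
    (h : 0 ≤ (b - a) * (m * a - l * b)) : a ≤ b ∧ l * b ≤ m * a := by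
  have hla : l * a ≤ m * a := mul_le_mul_of_nonneg_right hlm.le ha
  constructor
  · by_contra! hba
    have : m * a - l * b ≤ 0 := nonpos_of_mul_nonneg_right h (sub_neg.2 hba)
    linarith [mul_lt_mul_of_pos_left hba hl]
  · by_contra! hab
    have : b - a ≤ 0 := nonpos_of_mul_nonneg_left h (sub_neg.2 hab)
    linarith [mul_le_mul_of_nonneg_left (sub_nonpos.1 this) hl.le]

section Resolvent

variable {H : Type*} [NormedAddCommGroup H] [InnerProductSpace ℝ H] {A : H → Set H}
  {x y z : H} {l m : ℝ}

theorem norm_sub_pos_of_mem_smul (hx : 0 ∉ A x) (hl : l ≠ 0) (hy : x - y ∈ l • A y) :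
    0 < ‖x - y‖ := by
  refine norm_pos_iff.2 fun hxy => hx ?_
  rwa [Set.mem_smul_set_iff_inv_smul_mem₀ hl, hxy, smul_zero, ← sub_eq_zero.1 hxy] at hy

theorem IsMonotoneOperator.norm_sub_le_and_mul_le (hA : IsMonotoneOperator A) (hl : 0 < l)
    (hlm : l < m) (hy : x - y ∈ l • A y) (hz : x - z ∈ m • A z) :
    ‖x - y‖ ≤ ‖x - z‖ ∧ l * ‖x - z‖ ≤ m * ‖x - y‖ := by
  have hm : 0 < m := hl.trans hlm
  have hmon := hA _ _ _ _ ((Set.mem_smul_set_iff_inv_smul_mem₀ hl.ne' _ _).1 hy)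
    ((Set.mem_smul_set_iff_inv_smul_mem₀ hm.ne' _ _).1 hz)
  rw [show y - z = (x - z) - (x - y) by abel] at hmon
  set a := x - y
  set b := x - z
  have hexpand : ⟪l⁻¹ • a - m⁻¹ • b, b - a⟫ * (l * m) =
      (m + l) * ⟪a, b⟫ - m * ‖a‖ ^ 2 - l * ‖b‖ ^ 2 := by
    simp only [inner_sub_left, inner_sub_right, real_inner_smul_left,
      real_inner_self_eq_norm_sq, real_inner_comm b a]
    field_simp
    ring
  have hcs : (m + l) * ⟪a, b⟫ ≤ (m + l) * (‖a‖ * ‖b‖) :=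
    mul_le_mul_of_nonneg_left (real_inner_le_norm a b) (by positivity)
  have key : 0 ≤ (‖b‖ - ‖a‖) * (m * ‖a‖ - l * ‖b‖) := by
    nlinarith [mul_nonneg hmon (mul_pos hl hm).le]
  exact le_and_mul_le_mul_of_mul_nonneg hl hlm (norm_nonneg a) key

end Resolvent

section RealFunctions

variable {f g : ℝ → ℝ} {α : ℝ}

-- `f s` lies between `f t` and `s * (f t / t)`, and both tend to `f t` as `s → t`.
theorem continuousOn_Ioi_of_monotoneOn_of_antitoneOn_div (hf : MonotoneOn f (Ioi 0))
    (hf' : AntitoneOn (fun t => f t / t) (Ioi 0)) : ContinuousOn f (Ioi 0) := by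
  intro t (ht : 0 < t)
  refine ContinuousAt.continuousWithinAt ?_
  have hlim : Tendsto (fun s => s * (f t / t)) (𝓝 t) (𝓝 (f t)) := by
    simpa [mul_div_cancel₀ _ ht.ne'] using (continuous_mul_const (f t / t)).tendsto t
  have hbetween : ∀ s ∈ Ioi (0 : ℝ), min (f t) (s * (f t / t)) ≤ f s ∧
      f s ≤ max (f t) (s * (f t / t)) := by
    intro s (hs : 0 < s)
    rcases le_or_gt t s with hts | hst
    · have hratio : f s / s ≤ f t / t := hf' ht hs hts
      exact ⟨min_le_of_left_le (hf ht hs hts),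
        le_max_of_le_right ((div_le_iff₀' hs).1 hratio)⟩
    · have hratio : f t / t ≤ f s / s := hf' hs ht hst.le
      exact ⟨min_le_of_right_le ((le_div_iff₀' hs).1 hratio),
        le_max_of_le_left (hf hs ht hst.le)⟩
  have hev := eventually_of_mem (Ioi_mem_nhds ht) hbetween
  exact tendsto_of_tendsto_of_tendsto_of_le_of_le'
    (by simpa using (tendsto_const_nhds (x := f t)).min hlim)
    (by simpa using (tendsto_const_nhds (x := f t)).max hlim)
    (hev.mono fun _ h => h.1) (hev.mono fun _ h => h.2)

theorem continuousOn_rpow_mul_Ici (hα : 0 < α) (hg : MonotoneOn g (Ioi 0))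
    (hg0 : ∀ t ∈ Ioi (0 : ℝ), 0 ≤ g t) (hgc : ContinuousOn g (Ioi 0)) :
    ContinuousOn (fun t => t ^ α * g t) (Ici 0) := by
  intro t (ht : 0 ≤ t)
  rcases ht.eq_or_lt with rfl | ht
  · rw [← continuousWithinAt_Ioi_iff_Ici, ContinuousWithinAt, Real.zero_rpow hα.ne', zero_mul]
    have hbound : Tendsto (fun t : ℝ => t ^ α * g 1) (𝓝 0) (𝓝 0) := by
      simpa [Real.zero_rpow hα.ne'] using
        (Real.continuousAt_rpow_const 0 α (Or.inr hα.le)).tendsto.mul_const (g 1)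
    refine squeeze_zero' ?_ ?_ (hbound.mono_left nhdsWithin_le_nhds)
    · filter_upwards [self_mem_nhdsWithin] with s (hs : 0 < s)
      exact mul_nonneg (Real.rpow_nonneg hs.le α) (hg0 s hs)
    · filter_upwards [Ioo_mem_nhdsGT one_pos] with s hs
      exact mul_le_mul_of_nonneg_left (hg hs.1 (mem_Ioi.2 one_pos) hs.2.le)
        (Real.rpow_nonneg hs.1.le α)
  · exact ((Real.continuousAt_rpow_const t α (Or.inl ht.ne')).mul
      (hgc.continuousAt (Ioi_mem_nhds ht))).continuousWithinAt

theorem strictMonoOn_rpow_mul_Ici (hα : 0 < α) (hg : MonotoneOn g (Ioi 0))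
    (hg0 : ∀ t ∈ Ioi (0 : ℝ), 0 < g t) : StrictMonoOn (fun t => t ^ α * g t) (Ici 0) := by
  intro s (hs : 0 ≤ s) t (ht : 0 ≤ t) hst
  have ht : 0 < t := hs.trans_lt hst
  rcases hs.eq_or_lt with rfl | hs
  · simpa [Real.zero_rpow hα.ne'] using mul_pos (Real.rpow_pos_of_pos ht α) (hg0 t ht)
  · calc s ^ α * g s < t ^ α * g s :=
          mul_lt_mul_of_pos_right (Real.rpow_lt_rpow hs.le hst hα) (hg0 s hs)
      _ ≤ t ^ α * g t := mul_le_mul_of_nonneg_left (hg hs ht hst.le) (Real.rpow_nonneg ht.le α)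

theorem tendsto_rpow_mul_atTop (hα : 0 < α) (hg : MonotoneOn g (Ioi 0)) (hg1 : 0 < g 1) :
    Tendsto (fun t => t ^ α * g t) atTop atTop := by
  refine tendsto_atTop_mono' atTop ?_ ((tendsto_rpow_atTop hα).atTop_mul_const hg1)
  filter_upwards [eventually_ge_atTop 1] with t ht
  exact mul_le_mul_of_nonneg_left (hg (mem_Ioi.2 one_pos) (one_pos.trans_le ht) ht)
    (Real.rpow_nonneg (zero_le_one.trans ht) α)

end RealFunctions

theorem stmt_2_general {H : Type*} [NormedAddCommGroup H] [InnerProductSpace ℝ H]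
    (A : H → Set H)
    (hmono : ∀ x y u v : H, u ∈ A x → v ∈ A y → 0 ≤ ⟪u - v, x - y⟫)
    (p : ℕ) (hp : 2 ≤ p)
    (x : H) (hx : 0 ∉ A x)
    (y : ℝ → H) (hy : ∀ l : ℝ, 0 < l → x - y l ∈ l • A (y l))
    (φ : ℝ → ℝ)
    (hφ : ∀ l : ℝ, 0 < l → φ l = l ^ (1 / ((p : ℝ) - 1)) * ‖x - y l‖)
    (hφ0 : φ 0 = 0) :
    ContinuousOn φ (Ici 0) ∧ StrictMonoOn φ (Ici 0) ∧ Tendsto φ atTop atTop := by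
  have hα : 0 < 1 / ((p : ℝ) - 1) := by
    have : (2 : ℝ) ≤ p := by exact_mod_cast hp
    exact one_div_pos.2 (by linarith)
  set s : ℝ → ℝ := fun t => ‖x - y t‖
  have hpos : ∀ t ∈ Ioi (0 : ℝ), 0 < s t := fun t ht =>
    norm_sub_pos_of_mem_smul hx (ne_of_gt ht) (hy t ht)
  have hres {l m : ℝ} (hl : 0 < l) (hlm : l < m) : s l ≤ s m ∧ l * s m ≤ m * s l :=
    IsMonotoneOperator.norm_sub_le_and_mul_le (A := A) hmono hl hlm (hy l hl) (hy m (hl.trans hlm))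
  have hs : MonotoneOn s (Ioi 0) :=
    monotoneOn_iff_forall_lt.2 fun l hl _ _ hlm => (hres hl hlm).1
  have hs' : AntitoneOn (fun t => s t / t) (Ioi 0) :=
    antitoneOn_iff_forall_lt.2 fun l hl m hm hlm =>
      (div_le_div_iff₀ hm hl).2 (by linarith [(hres hl hlm).2])
  have hφs : EqOn (fun t => t ^ (1 / ((p : ℝ) - 1)) * s t) φ (Ici 0) := by
    intro t (ht : 0 ≤ t)
    rcases ht.eq_or_lt with rfl | ht
    · exact (mul_eq_zero_of_left (Real.zero_rpow hα.ne') _).trans hφ0.symm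
    · exact (hφ t ht).symm
  exact ⟨(continuousOn_rpow_mul_Ici hα hs (fun t ht => (hpos t ht).le)
      (continuousOn_Ioi_of_monotoneOn_of_antitoneOn_div hs hs')).congr hφs.symm,
    (strictMonoOn_rpow_mul_Ici hα hs hpos).congr hφs,
    (tendsto_rpow_mul_atTop hα hs (hpos 1 (mem_Ioi.2 one_pos))).congr'
      (eventuallyEq_of_mem (Ici_mem_atTop 0) hφs)⟩

/-- For fixed `x ∉ A⁻¹(0)`, the map
`φ(λ) = λ^{1/(p-1)} ‖x - (I + λA)⁻¹x‖` (with `φ(0) = 0`) is continuous on `[0, ∞)`,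
strictly increasing, and tends to `+∞` as `λ → +∞`. -/
theorem stmt_2 {H : Type*} [NormedAddCommGroup H] [InnerProductSpace ℝ H] [CompleteSpace H]
    (A : H → Set H)
    (hmono : ∀ x y u v : H, u ∈ A x → v ∈ A y → 0 ≤ ⟪u - v, x - y⟫)
    (p : ℕ) (hp : 2 ≤ p)
    (x : H) (hx : 0 ∉ A x)
    (y : ℝ → H) (hy : ∀ l : ℝ, 0 < l → x - y l ∈ l • A (y l))
    (φ : ℝ → ℝ)
    (hφ : ∀ l : ℝ, 0 < l → φ l = l ^ (1 / ((p : ℝ) - 1)) * ‖x - y l‖)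
    (hφ0 : φ 0 = 0) :
    ContinuousOn φ (Ici 0) ∧ StrictMonoOn φ (Ici 0) ∧ Tendsto φ atTop atTop :=
  stmt_2_general A hmono p hp x hx y hy φ hφ hφ0
end

section
/- Let p ≥ 2 be an integer and θ > 0. Suppose J : (0, ∞) × H → H satisfies x − J(λ, x) ∈ λ • A(J(λ, x)) for every λ > 0 and every x ∈ H (a resolvent selection for A). Define Γ_θ : H → [0, ∞) by Γ_θ(x) = (inf{α > 0 : ‖x − J(α^{-1}, x)‖ ≤ α^{1/(p−1)} θ^{1/(p−1)}})^{1/(p−1)}. Then Γ_θ is Lipschitz continuous with constant θ^{−1/(p−1)}: |Γ_θ(x₁) − Γ_θ(x₂)| ≤ θ^{−1/(p−1)}‖x₁ − x₂‖ for all x₁, x₂ ∈ H. -/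
open scoped Pointwise
open RealInnerProductSpace Filter Topology Set Metric

section aux
variable {H : Type*} [NormedAddCommGroup H] [InnerProductSpace ℝ H]

/-- `I - J_λ` is nonexpansive for a monotone operator. -/
lemma aux_contract (A : H → Set H)
    (hmono : ∀ x y u v : H, u ∈ A x → v ∈ A y → 0 ≤ ⟪u - v, x - y⟫)
    {l : ℝ} (hl : 0 < l) {x₁ x₂ y₁ y₂ : H}
    (h₁ : x₁ - y₁ ∈ l • A y₁) (h₂ : x₂ - y₂ ∈ l • A y₂) :
    ‖(x₁ - y₁) - (x₂ - y₂)‖ ≤ ‖x₁ - x₂‖ := by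
  rw [Set.mem_smul_set] at h₁ h₂
  obtain ⟨a, ha, hA⟩ := h₁
  obtain ⟨b, hb, hB⟩ := h₂
  have hm := hmono _ _ _ _ ha hb
  have heq : (x₁ - y₁) - (x₂ - y₂) = l • (a - b) := by rw [smul_sub, hA, hB]
  have hy : y₁ - y₂ = (x₁ - x₂) - ((x₁ - y₁) - (x₂ - y₂)) := by abel
  have h0 : 0 ≤ ⟪(x₁ - y₁) - (x₂ - y₂), (x₁ - x₂) - ((x₁ - y₁) - (x₂ - y₂))⟫ := by
    rw [← hy, heq, real_inner_smul_left]
    exact mul_nonneg hl.le hm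
  set w : H := (x₁ - y₁) - (x₂ - y₂)
  have h1 : ‖w‖ * ‖w‖ ≤ ⟪w, x₁ - x₂⟫ := by
    rw [inner_sub_right, real_inner_self_eq_norm_mul_norm] at h0
    linarith
  have h2 := real_inner_le_norm w (x₁ - x₂)
  nlinarith [norm_nonneg w, norm_nonneg (x₁ - x₂)]

/-- `λ ↦ ‖x - J_λ x‖` is nondecreasing. -/
lemma aux_mono (A : H → Set H)
    (hmono : ∀ x y u v : H, u ∈ A x → v ∈ A y → 0 ≤ ⟪u - v, x - y⟫)
    {l m : ℝ} (hl : 0 < l) (hlm : l ≤ m) {x y₁ y₂ : H}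
    (h₁ : x - y₁ ∈ l • A y₁) (h₂ : x - y₂ ∈ m • A y₂) :
    ‖x - y₁‖ ≤ ‖x - y₂‖ := by
  have hm0 : 0 < m := lt_of_lt_of_le hl hlm
  rw [Set.mem_smul_set] at h₁ h₂
  obtain ⟨a, ha, hA⟩ := h₁
  obtain ⟨b, hb, hB⟩ := h₂
  have hmon := hmono _ _ _ _ ha hb
  have hy : y₁ - y₂ = m • b - l • a := by
    have e1 : y₁ = x - l • a := by rw [hA]; abel
    have e2 : y₂ = x - m • b := by rw [hB]; abel
    rw [e1, e2]; abel
  have hin : 0 ≤ ⟪a - b, m • b - l • a⟫ := by rw [← hy]; exact hmon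
  have hexp : ⟪a - b, m • b - l • a⟫
      = (l + m) * ⟪a, b⟫ - l * (‖a‖ * ‖a‖) - m * (‖b‖ * ‖b‖) := by
    simp only [inner_sub_left, inner_sub_right, real_inner_smul_right,
      real_inner_self_eq_norm_mul_norm, real_inner_comm b a]
    ring
  rw [hexp] at hin
  have hcs := real_inner_le_norm a b
  have hn1 : ‖x - y₁‖ = l * ‖a‖ := by
    rw [← hA, norm_smul, Real.norm_eq_abs, abs_of_pos hl]
  have hn2 : ‖x - y₂‖ = m * ‖b‖ := by
    rw [← hB, norm_smul, Real.norm_eq_abs, abs_of_pos hm0]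
  rw [hn1, hn2]
  rcases le_or_gt ‖a‖ ‖b‖ with h | h
  · exact mul_le_mul hlm h (norm_nonneg a) hm0.le
  · nlinarith [norm_nonneg a, norm_nonneg b]

end aux

/-- The function
`Γ_θ(x) = (inf { α > 0 : ‖x - (I + α⁻¹A)⁻¹x‖ ≤ α^{1/(p-1)} θ^{1/(p-1)} })^{1/(p-1)}`
is Lipschitz continuous with constant `θ^{-1/(p-1)}`. -/
theorem stmt_3 {H : Type*} [NormedAddCommGroup H] [InnerProductSpace ℝ H] [CompleteSpace H]
    (A : H → Set H)
    (hmono : ∀ x y u v : H, u ∈ A x → v ∈ A y → 0 ≤ ⟪u - v, x - y⟫)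
    (p : ℕ) (hp : 2 ≤ p) (θ : ℝ) (hθ : 0 < θ)
    (J : ℝ → H → H)
    (hJ : ∀ l : ℝ, 0 < l → ∀ x : H, x - J l x ∈ l • A (J l x))
    (Γ : H → ℝ)
    (hΓ : ∀ x : H, Γ x =
      (sInf {α : ℝ | 0 < α ∧
          ‖x - J α⁻¹ x‖ ≤ α ^ (1 / ((p : ℝ) - 1)) * θ ^ (1 / ((p : ℝ) - 1))}) ^
        (1 / ((p : ℝ) - 1))) :
    ∀ x₁ x₂ : H, |Γ x₁ - Γ x₂| ≤ θ ^ (-(1 / ((p : ℝ) - 1))) * ‖x₁ - x₂‖ := by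
  set q : ℝ := 1 / ((p : ℝ) - 1) with hqdef
  have hp2 : (2 : ℝ) ≤ (p : ℝ) := by exact_mod_cast hp
  have hq : 0 < q := by
    have h1 : (0:ℝ) < (p : ℝ) - 1 := by linarith
    rw [hqdef]; positivity
  set S : H → Set ℝ := fun x =>
    {α : ℝ | 0 < α ∧ ‖x - J α⁻¹ x‖ ≤ α ^ q * θ ^ q} with hSdef
  have hΓ' : ∀ x, Γ x = (sInf (S x)) ^ q := hΓ
  have hbdd : ∀ x, BddBelow (S x) := fun x => ⟨0, fun α hα => hα.1.le⟩
  have hθq : (0 : ℝ) < θ ^ q := Real.rpow_pos_of_pos hθ q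
  have hθneg : θ ^ (-q) = (θ ^ q)⁻¹ := by
    rw [Real.rpow_neg hθ.le]
  have hθnn : (0:ℝ) ≤ θ ^ (-q) := Real.rpow_nonneg hθ.le _
  -- nonemptiness
  have hne : ∀ x : H, (S x).Nonempty := by
    intro x
    set M : ℝ := ‖x - J 1 x‖ with hM
    have hMnn : 0 ≤ M * θ ^ (-q) := mul_nonneg (norm_nonneg _) hθnn
    set c : ℝ := (M * θ ^ (-q)) ^ q⁻¹ with hc
    refine ⟨max 1 c, ?_, ?_⟩
    · exact lt_of_lt_of_le one_pos (le_max_left _ _)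
    · have hα1 : (1:ℝ) ≤ max 1 c := le_max_left _ _
      have hα0 : (0:ℝ) < max 1 c := lt_of_lt_of_le one_pos hα1
      have hinv : (max 1 c)⁻¹ ≤ 1 := by
        rw [inv_le_one_iff₀]; right; exact hα1
      have h1 : ‖x - J (max 1 c)⁻¹ x‖ ≤ M := by
        rw [hM]
        exact aux_mono A hmono (inv_pos.mpr hα0) hinv
          (hJ _ (inv_pos.mpr hα0) x) (hJ 1 one_pos x)
      have h2 : M ≤ (max 1 c) ^ q * θ ^ q := by
        have hcle : c ≤ max 1 c := le_max_right _ _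
        have hcnn : 0 ≤ c := Real.rpow_nonneg hMnn _
        have : c ^ q ≤ (max 1 c) ^ q := Real.rpow_le_rpow hcnn hcle hq.le
        have hcq : c ^ q = M * θ ^ (-q) := by
          rw [hc, ← Real.rpow_mul hMnn, inv_mul_cancel₀ hq.ne', Real.rpow_one]
        have hmul : M * θ ^ (-q) * θ ^ q = M := by
          rw [hθneg]; field_simp
        calc M = M * θ ^ (-q) * θ ^ q := hmul.symm
          _ = c ^ q * θ ^ q := by rw [hcq]
          _ ≤ (max 1 c) ^ q * θ ^ q := by
              exact mul_le_mul_of_nonneg_right this hθq.le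
      exact h1.trans h2
  -- key one-sided inequality
  have key : ∀ x₁ x₂ : H, Γ x₁ ≤ Γ x₂ + θ ^ (-q) * ‖x₁ - x₂‖ := by
    intro x₁ x₂
    rw [hΓ' x₁, hΓ' x₂]
    set d : ℝ := ‖x₁ - x₂‖ with hd
    have hdnn : 0 ≤ d := norm_nonneg _
    set m₁ : ℝ := sInf (S x₁) with hm₁
    set m₂ : ℝ := sInf (S x₂) with hm₂
    have hm₁nn : 0 ≤ m₁ := Real.sInf_nonneg (fun α hα => hα.1.le)
    have hm₂nn : 0 ≤ m₂ := Real.sInf_nonneg (fun α hα => hα.1.le)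
    have step : ∀ α ∈ S x₂, m₁ ^ q ≤ α ^ q + θ ^ (-q) * d := by
      rintro α ⟨hα0, hαle⟩
      have hαq0 : 0 < α ^ q := Real.rpow_pos_of_pos hα0 q
      have hbase : 0 < α ^ q + θ ^ (-q) * d :=
        add_pos_of_pos_of_nonneg hαq0 (mul_nonneg hθnn hdnn)
      set α' : ℝ := (α ^ q + θ ^ (-q) * d) ^ q⁻¹ with hα'
      have hα'0 : 0 < α' := Real.rpow_pos_of_pos hbase _
      have hα'q : α' ^ q = α ^ q + θ ^ (-q) * d := by
        rw [hα', ← Real.rpow_mul hbase.le, inv_mul_cancel₀ hq.ne', Real.rpow_one]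
      have hαα' : α ≤ α' := by
        have h1 : (α ^ q) ^ q⁻¹ ≤ (α ^ q + θ ^ (-q) * d) ^ q⁻¹ :=
          Real.rpow_le_rpow hαq0.le (le_add_of_nonneg_right (mul_nonneg hθnn hdnn))
            (inv_pos.mpr hq).le
        rwa [← Real.rpow_mul hα0.le, mul_inv_cancel₀ hq.ne', Real.rpow_one] at h1
      have hmem : α' ∈ S x₁ := by
        refine ⟨hα'0, ?_⟩
        have hstep1 : ‖x₁ - J α'⁻¹ x₁‖ ≤ ‖x₂ - J α'⁻¹ x₂‖ + d := by
          have hcon := aux_contract A hmono (inv_pos.mpr hα'0)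
            (hJ α'⁻¹ (inv_pos.mpr hα'0) x₁) (hJ α'⁻¹ (inv_pos.mpr hα'0) x₂)
          have htri : ‖x₁ - J α'⁻¹ x₁‖
              ≤ ‖(x₁ - J α'⁻¹ x₁) - (x₂ - J α'⁻¹ x₂)‖ + ‖x₂ - J α'⁻¹ x₂‖ := by
            have := norm_sub_norm_le (x₁ - J α'⁻¹ x₁) (x₂ - J α'⁻¹ x₂)
            linarith
          linarith
        have hstep2 : ‖x₂ - J α'⁻¹ x₂‖ ≤ ‖x₂ - J α⁻¹ x₂‖ := by
          have hinvle : α'⁻¹ ≤ α⁻¹ := inv_anti₀ hα0 hαα'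
          exact aux_mono A hmono (inv_pos.mpr hα'0) hinvle
            (hJ α'⁻¹ (inv_pos.mpr hα'0) x₂) (hJ α⁻¹ (inv_pos.mpr hα0) x₂)
        have hrhs : α ^ q * θ ^ q + d = α' ^ q * θ ^ q := by
          rw [hα'q, hθneg]; field_simp
        calc ‖x₁ - J α'⁻¹ x₁‖ ≤ ‖x₂ - J α'⁻¹ x₂‖ + d := hstep1
          _ ≤ ‖x₂ - J α⁻¹ x₂‖ + d := by linarith
          _ ≤ α ^ q * θ ^ q + d := by linarith
          _ = α' ^ q * θ ^ q := hrhs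
      have hle : m₁ ≤ α' := csInf_le (hbdd x₁) hmem
      calc m₁ ^ q ≤ α' ^ q := Real.rpow_le_rpow hm₁nn hle hq.le
        _ = α ^ q + θ ^ (-q) * d := hα'q
    by_contra hcon
    push_neg at hcon
    have hcpos : 0 < m₁ ^ q - θ ^ (-q) * d := by
      have : 0 ≤ m₂ ^ q := Real.rpow_nonneg hm₂nn _
      linarith
    set c : ℝ := m₁ ^ q - θ ^ (-q) * d with hcdef
    have hm₂c : m₂ ^ q < c := by rw [hcdef]; linarith
    have hm₂lt : m₂ < c ^ q⁻¹ := by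
      have h1 : (m₂ ^ q) ^ q⁻¹ < c ^ q⁻¹ :=
        Real.rpow_lt_rpow (Real.rpow_nonneg hm₂nn _) hm₂c (inv_pos.mpr hq)
      rwa [← Real.rpow_mul hm₂nn, mul_inv_cancel₀ hq.ne', Real.rpow_one] at h1
    obtain ⟨α, hαS, hαlt⟩ := exists_lt_of_csInf_lt (hne x₂) hm₂lt
    have hαq : α ^ q < c := by
      have h1 : α ^ q < (c ^ q⁻¹) ^ q := Real.rpow_lt_rpow hαS.1.le hαlt hq
      rwa [← Real.rpow_mul hcpos.le, inv_mul_cancel₀ hq.ne', Real.rpow_one] at h1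
    have := step α hαS
    rw [hcdef] at hαq
    linarith
  intro x₁ x₂
  rw [abs_sub_le_iff]
  constructor
  · have := key x₁ x₂; linarith
  · have := key x₂ x₁
    rw [norm_sub_rev] at this
    linarith
end

section
/- Let p ≥ 2 be an integer, θ > 0, and let J : (0, ∞) × H → H be a resolvent selection for A, i.e. x − J(λ, x) ∈ λ • A(J(λ, x)) for all λ > 0 and x ∈ H. Suppose (x, λ, y) is a solution of the closed-loop control system on an interval [0, t₀] with y(t) = J(λ(t), x(t)) for all t ∈ [0, t₀] and λ locally Lipschitz continuous. Then at every t ∈ (0, t₀) at which λ is differentiable, |λ'(t)| ≤ (p − 1)·λ(t). -/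
open scoped Pointwise
open RealInnerProductSpace Filter Topology Set Metric

/-- A solution of the closed-loop control system on the time set `T`:
`x` is continuously differentiable with `x'(t) = y(t) - x(t)`,
`y(t)` is the resolvent point `(I + λ(t)A)⁻¹ x(t)` (i.e. `x(t) - y(t) ∈ λ(t) • A (y t)`),
`λ` is continuous and positive, and the algebraic equation
`λ(t) ‖y(t) - x(t)‖^{p-1} = θ` holds. -/
def IsCLSolution {H : Type*} [NormedAddCommGroup H] [InnerProductSpace ℝ H]
    (A : H → Set H) (p : ℕ) (θ : ℝ) (T : Set ℝ)
    (x : ℝ → H) (lam : ℝ → ℝ) (y : ℝ → H) : Prop :=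
  (∀ t ∈ T, 0 < lam t) ∧ ContinuousOn lam T ∧
  (∀ t ∈ T, x t - y t ∈ lam t • A (y t)) ∧
  (∀ t ∈ T, HasDerivWithinAt x (y t - x t) T t) ∧
  ContinuousOn (fun t => y t - x t) T ∧
  (∀ t ∈ T, lam t * ‖y t - x t‖ ^ (p - 1) = θ)


set_option maxHeartbeats 1000000 in
lemma key_alg {H : Type*} [NormedAddCommGroup H] [InnerProductSpace ℝ H]
    (l1 l2 : ℝ) (h1 : 0 < l1) (h2 : 0 < l2) (w1 w2 z : H)
    (hm : 0 ≤ ⟪l1⁻¹ • w1 - l2⁻¹ • w2, z - (w1 - w2)⟫) :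
    l2 * (‖w1‖ / l1 - ‖w2‖ / l2) * (‖w1‖ - ‖w2‖) ≤
      ‖z‖ ^ 2 + |l1 - l2| * (‖w1‖ / l1) * ‖z‖ := by
  set a : H := l1⁻¹ • w1 with ha
  set b : H := l2⁻¹ • w2 with hb
  have hw1 : w1 = l1 • a := by rw [ha, smul_inv_smul₀ h1.ne']
  have hw2 : w2 = l2 • b := by rw [hb, smul_inv_smul₀ h2.ne']
  have hnw1 : ‖w1‖ = l1 * ‖a‖ := by rw [hw1, norm_smul, Real.norm_eq_abs, abs_of_pos h1]
  have hnw2 : ‖w2‖ = l2 * ‖b‖ := by rw [hw2, norm_smul, Real.norm_eq_abs, abs_of_pos h2]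
  have hda : ‖w1‖ / l1 = ‖a‖ := by rw [hnw1]; field_simp
  have hdb : ‖w2‖ / l2 = ‖b‖ := by rw [hnw2]; field_simp
  rw [hda, hdb, hnw1, hnw2]
  -- hm rewritten
  have hm' : ⟪a - b, l1 • a - l2 • b⟫ ≤ ⟪a - b, z⟫ := by
    have := hm
    rw [hw1, hw2] at this
    rw [inner_sub_right] at this
    linarith
  have h3 : ⟪a - b, l1 • a - l2 • b⟫
      = l1 * ‖a‖ ^ 2 + l2 * ‖b‖ ^ 2 - (l1 + l2) * ⟪a, b⟫ := by
    simp only [inner_sub_left, inner_sub_right, inner_smul_right, real_inner_self_eq_norm_sq,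
      real_inner_comm b a]
    ring
  have h4 : ⟪a - b, z⟫ ≤ ‖a - b‖ * ‖z‖ := real_inner_le_norm _ _
  have h5 : ⟪a, b⟫ ≤ ‖a‖ * ‖b‖ := real_inner_le_norm _ _
  have h6 : ‖a - b‖ ^ 2 = ‖a‖ ^ 2 + ‖b‖ ^ 2 - 2 * ⟪a, b⟫ := by
    rw [@norm_sub_sq_real]; ring
  have h7 : |‖a‖ ^ 2 - ⟪a, b⟫| ≤ ‖a‖ * ‖a - b‖ := by
    have : ‖a‖ ^ 2 - ⟪a, b⟫ = ⟪a, a - b⟫ := by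
      rw [inner_sub_right, real_inner_self_eq_norm_sq]
    rw [this]
    exact abs_real_inner_le_norm _ _
  -- step 1
  have step1 : (‖a‖ - ‖b‖) * (l1 * ‖a‖ - l2 * ‖b‖) ≤ ‖a - b‖ * ‖z‖ := by
    nlinarith [norm_nonneg a, norm_nonneg b]
  -- step 2
  have h7a : l1 - l2 ≤ |l1 - l2| := le_abs_self _
  have h7b : -(l1 - l2) ≤ |l1 - l2| := neg_le_abs _
  have h7c : ‖a‖ ^ 2 - ⟪a, b⟫ ≤ ‖a‖ * ‖a - b‖ := le_trans (le_abs_self _) h7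
  have h7d : -(‖a‖ ^ 2 - ⟪a, b⟫) ≤ ‖a‖ * ‖a - b‖ := le_trans (neg_le_abs _) h7
  have step2 : l2 * ‖a - b‖ ^ 2 ≤ ‖a - b‖ * ‖z‖ + |l1 - l2| * ‖a‖ * ‖a - b‖ := by
    have key : l2 * ‖a - b‖ ^ 2 = ⟪a - b, l1 • a - l2 • b⟫ - (l1 - l2) * (‖a‖ ^ 2 - ⟪a, b⟫) := by
      rw [h3, h6]; ring
    rcases le_or_gt 0 (l1 - l2) with hsgn | hsgn
    · nlinarith [abs_nonneg (l1 - l2), norm_nonneg (a - b), norm_nonneg a]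
    · nlinarith [abs_nonneg (l1 - l2), norm_nonneg (a - b), norm_nonneg a]
  -- step 3
  have step3 : l2 * ‖a - b‖ ≤ ‖z‖ + |l1 - l2| * ‖a‖ := by
    rcases eq_or_lt_of_le (norm_nonneg (a - b)) with hz | hz
    · rw [← hz, mul_zero]; positivity
    · refine le_of_mul_le_mul_right ?_ hz
      have e1 : l2 * ‖a - b‖ * ‖a - b‖ = l2 * ‖a - b‖ ^ 2 := by ring
      have e2 : (‖z‖ + |l1 - l2| * ‖a‖) * ‖a - b‖
          = ‖a - b‖ * ‖z‖ + |l1 - l2| * ‖a‖ * ‖a - b‖ := by ring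
      rw [e1, e2]; exact step2
  calc l2 * (‖a‖ - ‖b‖) * (l1 * ‖a‖ - l2 * ‖b‖)
      = l2 * ((‖a‖ - ‖b‖) * (l1 * ‖a‖ - l2 * ‖b‖)) := by ring
    _ ≤ l2 * (‖a - b‖ * ‖z‖) := mul_le_mul_of_nonneg_left step1 h2.le
    _ = (l2 * ‖a - b‖) * ‖z‖ := by ring
    _ ≤ (‖z‖ + |l1 - l2| * ‖a‖) * ‖z‖ := mul_le_mul_of_nonneg_right step3 (norm_nonneg z)
    _ = ‖z‖ ^ 2 + |l1 - l2| * ‖a‖ * ‖z‖ := by ring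

set_option maxHeartbeats 1000000 in
/-- Along a solution of the closed-loop control system on `[0, t₀]`
with `p ≥ 2`, at every `t ∈ (0, t₀)` where `λ` is differentiable,
`|λ'(t)| ≤ (p - 1) λ(t)`. -/
theorem stmt_5 {H : Type*} [NormedAddCommGroup H] [InnerProductSpace ℝ H] [CompleteSpace H]
    (A : H → Set H)
    (hmono : ∀ x y u v : H, u ∈ A x → v ∈ A y → 0 ≤ ⟪u - v, x - y⟫)
    (p : ℕ) (hp : 2 ≤ p) (θ : ℝ) (hθ : 0 < θ) (t₀ : ℝ) (ht₀ : 0 ≤ t₀)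
    (J : ℝ → H → H)
    (hJ : ∀ l : ℝ, 0 < l → ∀ x : H, x - J l x ∈ l • A (J l x))
    (x : ℝ → H) (lam : ℝ → ℝ) (y : ℝ → H)
    (hsol : IsCLSolution A p θ (Icc 0 t₀) x lam y)
    (hyJ : ∀ t ∈ Icc (0 : ℝ) t₀, y t = J (lam t) (x t))
    (hlip : ∀ t ∈ Icc (0 : ℝ) t₀, ∃ K : NNReal, ∃ s ∈ nhdsWithin t (Icc 0 t₀),
      LipschitzOnWith K lam s) :
    ∀ t ∈ Ioo (0 : ℝ) t₀, ∀ d : ℝ, HasDerivAt lam d t → |d| ≤ ((p : ℝ) - 1) * lam t := by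
  obtain ⟨hlampos, hlamcont, hmem, hderiv, hcont, halg⟩ := hsol
  intro t ht d hd
  have htT : t ∈ Icc (0:ℝ) t₀ := ⟨ht.1.le, ht.2.le⟩
  have hlt : 0 < lam t := hlampos t htT
  set n : ℕ := p - 1 with hn
  have hn0 : n ≠ 0 := by omega
  have hq : (0:ℝ) < (n:ℝ) := by exact_mod_cast Nat.pos_of_ne_zero hn0
  have hqp : (n:ℝ) = (p:ℝ) - 1 := by
    rw [hn]; push_cast [Nat.cast_sub (by omega : 1 ≤ p)]; ring
  set r : ℝ := ((n:ℝ))⁻¹ with hr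
  -- positivity of φ
  have hφpos : ∀ s ∈ Icc (0:ℝ) t₀, 0 < ‖y s - x s‖ := by
    intro s hs
    rcases (norm_nonneg (y s - x s)).lt_or_eq with h | h
    · exact h
    · exfalso
      have h1 := halg s hs
      rw [← h, zero_pow hn0, mul_zero] at h1
      exact hθ.ne h1
  -- Φ : smooth expression for φ
  set Φ : ℝ → ℝ := fun s => (θ * (lam s)⁻¹) ^ r with hΦ
  have hφeq : ∀ s ∈ Icc (0:ℝ) t₀, ‖y s - x s‖ = Φ s := by
    intro s hs
    have hls := hlampos s hs
    have h1 : ‖y s - x s‖ ^ n = θ * (lam s)⁻¹ := by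
      have h2 := halg s hs
      field_simp
      linarith
    calc ‖y s - x s‖ = (‖y s - x s‖ ^ n) ^ r := by
          rw [hr, Real.pow_rpow_inv_natCast (norm_nonneg _) hn0]
      _ = Φ s := by rw [hΦ, h1]
  set φt : ℝ := ‖y t - x t‖ with hφt
  have hφtpos : 0 < φt := hφpos t htT
  have hΦt : Φ t = φt := (hφeq t htT).symm
  -- derivatives
  have hinv : HasDerivAt (fun s => (lam s)⁻¹) (-d / lam t ^ 2) t := hd.inv hlt.ne'
  have hbase : HasDerivAt (fun s => θ * (lam s)⁻¹) (θ * (-d / lam t ^ 2)) t := hinv.const_mul θ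
  have hbpos : 0 < θ * (lam t)⁻¹ := by positivity
  have hΦd0 : HasDerivAt Φ (θ * (-d / lam t ^ 2) * r * (θ * (lam t)⁻¹) ^ (r - 1)) t :=
    hbase.rpow_const (Or.inl hbpos.ne')
  have hpow : (θ * (lam t)⁻¹) ^ (r - 1) = φt * lam t / θ := by
    rw [Real.rpow_sub hbpos, Real.rpow_one]
    have hb : (θ * (lam t)⁻¹) ^ r = φt := hΦt
    rw [hb]
    field_simp
  have hΦd : HasDerivAt Φ (-(d * φt * r) / lam t) t := by
    convert hΦd0 using 1
    rw [hpow]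
    field_simp
  have hΨd : HasDerivAt (fun s => Φ s * (lam s)⁻¹)
      (-(d * φt * r) / lam t * (lam t)⁻¹ + Φ t * (-d / lam t ^ 2)) t := hΦd.mul hinv
  set Ψ : ℝ → ℝ := fun s => Φ s * (lam s)⁻¹ with hΨ
  -- the filter
  have hLne : (𝓝[Icc (0:ℝ) t₀ \ {t}] t).NeBot := by
    apply mem_closure_iff_nhdsWithin_neBot.mp
    have hsub : Ioo t t₀ ⊆ Icc (0:ℝ) t₀ \ {t} := by
      intro s hs
      exact ⟨⟨le_trans ht.1.le (le_trans hs.1.le le_rfl), hs.2.le⟩, fun h => by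
        simp only [mem_singleton_iff] at h; exact absurd (h ▸ hs.1) (lt_irrefl _)⟩
    have hmem' : t ∈ closure (Ioo t t₀) := by
      rw [closure_Ioo ht.2.ne]; exact ⟨le_refl t, ht.2.le⟩
    exact closure_mono hsub hmem'
  -- slope limits
  have hxslope : Tendsto (slope x t) (𝓝[Icc (0:ℝ) t₀ \ {t}] t) (𝓝 (y t - x t)) :=
    hasDerivWithinAt_iff_tendsto_slope.mp (hderiv t htT)
  have hxn : Tendsto (fun s => ‖slope x t s‖) (𝓝[Icc (0:ℝ) t₀ \ {t}] t) (𝓝 φt) :=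
    hxslope.norm
  have hlamslope : Tendsto (slope lam t) (𝓝[Icc (0:ℝ) t₀ \ {t}] t) (𝓝 d) :=
    hasDerivWithinAt_iff_tendsto_slope.mp (hd.hasDerivWithinAt (s := Icc (0:ℝ) t₀))
  have hlamabs : Tendsto (fun s => |slope lam t s|) (𝓝[Icc (0:ℝ) t₀ \ {t}] t) (𝓝 |d|) :=
    hlamslope.abs
  have hΦslope : Tendsto (slope Φ t) (𝓝[Icc (0:ℝ) t₀ \ {t}] t) (𝓝 (-(d * φt * r) / lam t)) :=
    hasDerivWithinAt_iff_tendsto_slope.mp (hΦd.hasDerivWithinAt (s := Icc (0:ℝ) t₀))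
  have hΨslope : Tendsto (slope Ψ t) (𝓝[Icc (0:ℝ) t₀ \ {t}] t)
      (𝓝 (-(d * φt * r) / lam t * (lam t)⁻¹ + Φ t * (-d / lam t ^ 2))) :=
    hasDerivWithinAt_iff_tendsto_slope.mp (hΨd.hasDerivWithinAt (s := Icc (0:ℝ) t₀))
  have hlamt : Tendsto lam (𝓝[Icc (0:ℝ) t₀ \ {t}] t) (𝓝 (lam t)) :=
    hd.continuousAt.continuousWithinAt.tendsto
  -- F and G
  set F : ℝ → ℝ := fun s => lam s * (slope Ψ t s * slope Φ t s) with hF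
  set G : ℝ → ℝ := fun s =>
    ‖slope x t s‖ ^ 2 + |slope lam t s| * (Φ t * (lam t)⁻¹) * ‖slope x t s‖ with hG
  have hFt : Tendsto F (𝓝[Icc (0:ℝ) t₀ \ {t}] t)
      (𝓝 (lam t * ((-(d * φt * r) / lam t * (lam t)⁻¹ + Φ t * (-d / lam t ^ 2)) *
        (-(d * φt * r) / lam t)))) :=
    hlamt.mul (hΨslope.mul hΦslope)
  have hGt : Tendsto G (𝓝[Icc (0:ℝ) t₀ \ {t}] t)
      (𝓝 (φt ^ 2 + |d| * (Φ t * (lam t)⁻¹) * φt)) :=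
    (hxn.pow 2).add (((hlamabs.mul_const _).mul hxn))
  -- pointwise inequality
  have hev : ∀ᶠ s in 𝓝[Icc (0:ℝ) t₀ \ {t}] t, F s ≤ G s := by
    filter_upwards [self_mem_nhdsWithin] with s hs
    obtain ⟨hsT, hst⟩ := hs
    have hne : s ≠ t := by simpa using hst
    have hls := hlampos s hsT
    -- monotonicity
    obtain ⟨v, hv, hveq⟩ := Set.mem_smul_set.mp (hmem t htT)
    obtain ⟨w, hw, hweq⟩ := Set.mem_smul_set.mp (hmem s hsT)
    have hav : (lam t)⁻¹ • (x t - y t) = v := by rw [← hveq, inv_smul_smul₀ hlt.ne']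
    have haw : (lam s)⁻¹ • (x s - y s) = w := by rw [← hweq, inv_smul_smul₀ hls.ne']
    have hm0 : 0 ≤ ⟪(lam t)⁻¹ • (x t - y t) - (lam s)⁻¹ • (x s - y s),
        (x t - x s) - ((x t - y t) - (x s - y s))⟫ := by
      rw [hav, haw]
      have hyy : (x t - x s) - ((x t - y t) - (x s - y s)) = y t - y s := by abel
      rw [hyy]
      exact hmono (y t) (y s) v w hv hw
    have hkey := key_alg (lam t) (lam s) hlt hls (x t - y t) (x s - y s) (x t - x s) hm0
    -- rewrite norms
    have e1 : ‖x t - y t‖ = Φ t := by rw [norm_sub_rev]; exact hφeq t htT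
    have e2 : ‖x s - y s‖ = Φ s := by rw [norm_sub_rev]; exact hφeq s hsT
    rw [e1, e2] at hkey
    -- express F s, G s as key-div
    have hst0 : s - t ≠ 0 := sub_ne_zero.mpr hne
    have hst2 : (0:ℝ) < (s - t) ^ 2 := by positivity
    have hFs : F s = lam s * (Φ t / lam t - Φ s / lam s) * (Φ t - Φ s) / (s - t) ^ 2 := by
      simp only [hF, hΨ, slope_def_field]
      field_simp
      ring
    have hGs : G s = (‖x t - x s‖ ^ 2 + |lam t - lam s| * (Φ t / lam t) * ‖x t - x s‖) /
        (s - t) ^ 2 := by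
      simp only [hG]
      have hsl : ‖slope x t s‖ = ‖x t - x s‖ / |s - t| := by
        rw [slope_def_module, norm_smul, norm_inv, Real.norm_eq_abs, norm_sub_rev]
        ring
      have hsl2 : |slope lam t s| = |lam t - lam s| / |s - t| := by
        rw [slope_def_field, abs_div, abs_sub_comm]
      have habs0 : |s - t| ≠ 0 := abs_ne_zero.mpr hst0
      rw [hsl, hsl2, ← sq_abs (s - t)]
      generalize hu : |s - t| = u at habs0 ⊢
      field_simp
    rw [hFs, hGs]
    exact div_le_div_of_nonneg_right hkey hst2.le
  -- take limits
  have hle := le_of_tendsto_of_tendsto hFt hGt hev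
  -- conclude
  rw [hΦt] at hle
  rw [← hqp]
  have h1 : lam t ≠ 0 := hlt.ne'
  have h2 : (n:ℝ) ≠ 0 := hq.ne'
  have hL : lam t * ((-(d * φt * r) / lam t * (lam t)⁻¹ + φt * (-d / lam t ^ 2)) *
      (-(d * φt * r) / lam t))
      = d ^ 2 * φt ^ 2 * ((n:ℝ) + 1) / ((n:ℝ) ^ 2 * lam t ^ 2) := by
    rw [hr]; field_simp; ring
  have hR : φt ^ 2 + |d| * (φt * (lam t)⁻¹) * φt = (φt ^ 2 * (lam t + |d|)) / lam t := by
    field_simp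
  rw [hL, hR, div_le_div_iff₀ (by positivity) (by positivity)] at hle
  have hle2 : d ^ 2 * ((n:ℝ) + 1) ≤ (n:ℝ) ^ 2 * lam t ^ 2 + (n:ℝ) ^ 2 * lam t * |d| := by
    nlinarith [hle, mul_pos (pow_pos hφtpos 2) hlt, hφtpos, hlt, abs_nonneg d]
  by_contra hcon
  push_neg at hcon
  have h3 : 0 < |d| - (n:ℝ) * lam t := by linarith
  have h4 : 0 < ((n:ℝ) + 1) * |d| + (n:ℝ) * lam t := by positivity
  nlinarith [mul_pos h3 h4, sq_abs d, hle2]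
end

section
/- Let p ≥ 2 be an integer, θ > 0, and let J : (0, ∞) × H → H be a resolvent selection for A, i.e. x − J(λ, x) ∈ λ • A(J(λ, x)) for all λ > 0 and x ∈ H. Suppose (x, λ, y) is a solution of the closed-loop control system on an interval [0, t₀] with y(t) = J(λ(t), x(t)) for all t ∈ [0, t₀]. Then λ is nondecreasing on [0, t₀]. -/
open scoped Pointwise
open RealInnerProductSpace Filter Topology Set Metric

/-- `|x^(k+1) - y^(k+1)| ≤ (k+1) M^k |x-y|` for `0 ≤ x,y ≤ M`. -/
lemma pow_abs_sub_le (k : ℕ) (M : ℝ) : ∀ x y : ℝ, 0 ≤ x → x ≤ M → 0 ≤ y → y ≤ M →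
    |x ^ (k+1) - y ^ (k+1)| ≤ (k+1) * M ^ k * |x - y| := by
  induction k with
  | zero => intro x y _ _ _ _; simp
  | succ k ih =>
      intro x y hx hxM hy hyM
      have hM : 0 ≤ M := hx.trans hxM
      have h1 : x ^ (k+2) - y ^ (k+2) = x * (x ^ (k+1) - y ^ (k+1)) + (x - y) * y ^ (k+1) := by
        ring
      have h2 : |x ^ (k+2) - y ^ (k+2)| ≤ x * |x ^ (k+1) - y ^ (k+1)| + |x - y| * y ^ (k+1) := by
        rw [h1]
        refine (abs_add_le _ _).trans ?_
        rw [abs_mul, abs_mul, abs_of_nonneg hx, abs_of_nonneg (pow_nonneg hy _)]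
      have h3 : x * |x ^ (k+1) - y ^ (k+1)| ≤ M * ((k+1) * M ^ k * |x - y|) :=
        mul_le_mul hxM (ih x y hx hxM hy hyM) (abs_nonneg _) hM
      have h4 : |x - y| * y ^ (k+1) ≤ |x - y| * M ^ (k+1) :=
        mul_le_mul_of_nonneg_left (pow_le_pow_left₀ hy hyM _) (abs_nonneg _)
      have h6 : |x ^ (k+2) - y ^ (k+2)| ≤ M * ((k+1) * M ^ k * |x - y|) + |x - y| * M ^ (k+1) := by
        linarith
      have e : M * (((k:ℝ)+1) * M ^ k * |x - y|) + |x - y| * M ^ (k+1)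
          = ((k:ℝ) + 1 + 1) * M ^ (k+1) * |x - y| := by rw [pow_succ]; ring
      push_cast
      linarith
  
/-- Lipschitz-type bound for `a ↦ ‖a‖^(k+1) • a` on a ball of radius `M`. -/
lemma smul_pow_lip {H : Type*} [NormedAddCommGroup H] [InnerProductSpace ℝ H]
    (k : ℕ) (M : ℝ) (a b : H) (ha : ‖a‖ ≤ M) (hb : ‖b‖ ≤ M) :
    ‖(‖a‖ ^ (k+1)) • a - (‖b‖ ^ (k+1)) • b‖ ≤ ((k:ℝ)+2) * M ^ (k+1) * ‖a - b‖ := by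
  have hM : 0 ≤ M := (norm_nonneg a).trans ha
  have h1 : (‖a‖ ^ (k+1)) • a - (‖b‖ ^ (k+1)) • b
      = (‖a‖ ^ (k+1)) • (a - b) + (‖a‖ ^ (k+1) - ‖b‖ ^ (k+1)) • b := by
    rw [smul_sub, sub_smul]; abel
  rw [h1]
  refine (norm_add_le _ _).trans ?_
  rw [norm_smul, norm_smul]
  have h2 : ‖(‖a‖ ^ (k+1) : ℝ)‖ ≤ M ^ (k+1) := by
    rw [Real.norm_eq_abs, abs_of_nonneg (pow_nonneg (norm_nonneg a) _)]
    exact pow_le_pow_left₀ (norm_nonneg a) ha _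
  have h3 : ‖(‖a‖ ^ (k+1) - ‖b‖ ^ (k+1) : ℝ)‖ ≤ ((k:ℝ)+1) * M ^ k * ‖a - b‖ := by
    rw [Real.norm_eq_abs]
    refine (pow_abs_sub_le k M ‖a‖ ‖b‖ (norm_nonneg _) ha (norm_nonneg _) hb).trans ?_
    have := abs_norm_sub_norm_le a b
    have hk : (0:ℝ) ≤ ((k:ℝ)+1) * M ^ k := by positivity
    exact mul_le_mul_of_nonneg_left this hk
  have h4 : ‖(‖a‖ ^ (k+1) - ‖b‖ ^ (k+1) : ℝ)‖ * ‖b‖ ≤ (((k:ℝ)+1) * M ^ k * ‖a - b‖) * M :=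
    mul_le_mul h3 hb (norm_nonneg _) (by positivity)
  have h5 : ‖(‖a‖ ^ (k+1) : ℝ)‖ * ‖a - b‖ ≤ M ^ (k+1) * ‖a - b‖ :=
    mul_le_mul_of_nonneg_right h2 (norm_nonneg _)
  have e : (((k:ℝ)+1) * M ^ k * ‖a - b‖) * M + M ^ (k+1) * ‖a - b‖
      = ((k:ℝ)+2) * M ^ (k+1) * ‖a - b‖ := by rw [pow_succ]; ring
  linarith

/-- Scalar deduction step. -/
lemma scalar_step (a b c h q A B KE : ℝ) (hh : 0 < h) (hh1 : h ≤ 1) (hq : 0 < q)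
    (hqA : q ≤ A) (hAB : A ≤ B) (ha : 0 < a) (hab : a ≤ b) (hc : c ≤ a * b)
    (hD : 0 ≤ a ^ 2 + b ^ 2 - 2 * c)
    (main : A * a ^ 2 + B * b ^ 2 - (A + B) * c
      ≤ h * (A * a ^ 2 - B * c) + (q / 4) * (a ^ 2 + b ^ 2 - 2 * c) + KE) :
    h * (A * a) * (b - a) ≤ KE := by
  have hb : 0 < b := ha.trans_le hab
  have hT1 : 0 ≤ (B - A) * (b ^ 2 - a ^ 2) :=
    mul_nonneg (by linarith) (by nlinarith)
  have hT2 : 0 ≤ (a ^ 2 + b ^ 2 - 2 * c) * (2 * A + 2 * B - 2 * h * B - q) := by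
    have : 0 ≤ 2 * A + 2 * B - 2 * h * B - q := by nlinarith
    exact mul_nonneg hD this
  have hT3 : 0 ≤ h * ((1/2) * B * (a - b) ^ 2 + (B - A) * (a * b)) := by
    have : 0 ≤ (1/2) * B * (a - b) ^ 2 + (B - A) * (a * b) := by
      have hB0 : (0:ℝ) < B := lt_of_lt_of_le hq (hqA.trans hAB)
      have h1 : 0 ≤ (1/2) * B * (a - b) ^ 2 :=
        mul_nonneg (mul_nonneg (by norm_num) hB0.le) (sq_nonneg _)
      have h2 : 0 ≤ (B - A) * (a * b) := mul_nonneg (by linarith) (mul_pos ha hb).le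
      linarith
    exact mul_nonneg hh.le this
  have hX : (1/2)*((B-A)*(b^2-a^2)) + (1/4)*((a^2+b^2-2*c)*(2*A+2*B-2*h*B-q))
      + h*((1/2)*B*(a-b)^2 + (B-A)*(a*b))
      = -(h * (A * a ^ 2 - B * c) + q / 4 * (a ^ 2 + b ^ 2 - 2 * c)
          - (A * a ^ 2 + B * b ^ 2 - (A + B) * c)) - h*(A*a)*(b-a) := by ring
  linarith [hT1, hT2, hT3, main, hX.le, hX.ge]


set_option maxHeartbeats 1000000 in
/-- Along a solution of the closed-loop control system on `[0, t₀]`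
with `p ≥ 2`, the feedback law `λ` is nondecreasing on `[0, t₀]`. -/
theorem stmt_6 {H : Type*} [NormedAddCommGroup H] [InnerProductSpace ℝ H] [CompleteSpace H]
    (A : H → Set H)
    (hmono : ∀ x y u v : H, u ∈ A x → v ∈ A y → 0 ≤ ⟪u - v, x - y⟫)
    (p : ℕ) (hp : 2 ≤ p) (θ : ℝ) (hθ : 0 < θ) (t₀ : ℝ) (ht₀ : 0 ≤ t₀)
    (J : ℝ → H → H)
    (hJ : ∀ l : ℝ, 0 < l → ∀ x : H, x - J l x ∈ l • A (J l x))
    (x : ℝ → H) (lam : ℝ → ℝ) (y : ℝ → H)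
    (hsol : IsCLSolution A p θ (Icc 0 t₀) x lam y)
    (hyJ : ∀ t ∈ Icc (0 : ℝ) t₀, y t = J (lam t) (x t)) :
    MonotoneOn lam (Icc 0 t₀) := by
  obtain ⟨hpos, hlamc, hAmem, hx', hwc, halgeb⟩ := hsol
  obtain ⟨k, hk⟩ : ∃ k, p - 1 = k + 1 := ⟨p - 2, by omega⟩
  set g : ℝ → ℝ := fun s => ‖y s - x s‖ with hgdef
  have hgc : ContinuousOn g (Icc 0 t₀) := hwc.norm
  have halg : ∀ s ∈ Icc (0:ℝ) t₀, lam s * (g s) ^ (k+1) = θ := by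
    intro s hs; rw [← hk]; exact halgeb s hs
  have hgpos : ∀ s ∈ Icc (0:ℝ) t₀, 0 < g s := by
    intro s hs
    rcases (norm_nonneg (y s - x s)).lt_or_eq with h | h
    · exact h
    · exfalso
      have h2 := halg s hs
      rw [show g s = ‖y s - x s‖ from rfl, ← h] at h2
      simp at h2
      linarith
  have hne : (Icc (0:ℝ) t₀).Nonempty := nonempty_Icc.mpr ht₀
  obtain ⟨tm, htm, hmin⟩ := isCompact_Icc.exists_isMinOn hne hgc
  obtain ⟨tM, htM, hmax⟩ := isCompact_Icc.exists_isMaxOn hne hgc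
  set m := g tm with hmdef
  set M := g tM with hMdef
  have hm0 : 0 < m := hgpos tm htm
  have hmle : ∀ s ∈ Icc (0:ℝ) t₀, m ≤ g s := fun s hs => isMinOn_iff.mp hmin s hs
  have hMle : ∀ s ∈ Icc (0:ℝ) t₀, g s ≤ M := fun s hs => isMaxOn_iff.mp hmax s hs
  have hM0 : 0 < M := lt_of_lt_of_le hm0 (hmle tM htM)
  set L : ℝ := ((k:ℝ)+2) * M^(k+1) with hLdef
  have hL0 : 0 < L := mul_pos (by positivity) (pow_pos hM0 _)
  set q : ℝ := m^(k+1) with hqdef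
  have hq0 : 0 < q := pow_pos hm0 _
  set K : ℝ := L^2 / q with hKdef
  have hK0 : 0 < K := div_pos (pow_pos hL0 2) hq0
  have hKq : K * q = L^2 := div_mul_cancel₀ _ hq0.ne'
  clear_value m M L q K
  -- Key pointwise slope estimate
  have key : ∀ t ∈ Ico (0:ℝ) t₀, ∀ r : ℝ, 0 < r → ∀ᶠ z in 𝓝[>] t, slope g t z < r := by
    intro t ht r hr
    have htS : t ∈ Icc (0:ℝ) t₀ := Ico_subset_Icc_self ht
    set η := Real.sqrt (r * q^2 * m / (2 * L^2)) with hηdef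
    have hargpos : 0 < r * q^2 * m / (2 * L^2) := by positivity
    have hηpos : 0 < η := Real.sqrt_pos.mpr hargpos
    have hηsq : η^2 = r * q^2 * m / (2 * L^2) := Real.sq_sqrt hargpos.le
    have hd := hx' t htS
    rw [hasDerivWithinAt_iff_isLittleO] at hd
    have hε1 : ∀ᶠ z in 𝓝[Icc 0 t₀] t,
        ‖x z - x t - (z - t) • (y t - x t)‖ ≤ η * ‖z - t‖ := hd.def hηpos
    have hmem : Ioc t t₀ ∈ 𝓝[>] t := Ioc_mem_nhdsGT ht.2
    have hsub : 𝓝[Ioc t t₀] t ≤ 𝓝[Icc 0 t₀] t :=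
      nhdsWithin_mono t (fun z hz => ⟨ht.1.trans hz.1.le, hz.2⟩)
    have hε2 : ∀ᶠ z in 𝓝[Ioc t t₀] t,
        ‖x z - x t - (z - t) • (y t - x t)‖ ≤ η * ‖z - t‖ := hsub hε1
    have heq : 𝓝[Ioc t t₀] t = 𝓝[>] t ⊓ 𝓟 (Ioc t t₀) := by
      rw [← nhdsWithin_inter' t (Ioi t) (Ioc t t₀),
        inter_eq_self_of_subset_right Ioc_subset_Ioi_self]
    rw [heq] at hε2
    have hε3 := eventually_inf_principal.mp hε2
    have hmem1 : ∀ᶠ z in 𝓝[>] t, z ∈ Ioc t (t+1) := Ioc_mem_nhdsGT (lt_add_one t)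
    filter_upwards [hε3, hmem, hmem1] with z hεz hz hz1
    have hzS : z ∈ Icc (0:ℝ) t₀ := ⟨ht.1.trans hz.1.le, hz.2⟩
    have hht : 0 < z - t := sub_pos.mpr hz.1
    have hh1 : z - t ≤ 1 := by have := hz1.2; linarith
    rw [slope_def_field]
    rcases le_or_gt (g z) (g t) with hba | habs
    · have : (g z - g t) / (z - t) ≤ 0 := div_nonpos_of_nonpos_of_nonneg (by linarith) hht.le
      linarith
    · have hab' : g t ≤ g z := habs.le
      have hat0 : 0 < g t := hgpos t htS
      obtain ⟨vt, hvtA, hvt⟩ := Set.mem_smul_set.mp (hAmem t htS)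
      obtain ⟨vz, hvzA, hvz⟩ := Set.mem_smul_set.mp (hAmem z hzS)
      have hmono0 := hmono (y t) (y z) vt vz hvtA hvzA
      have hgt : ‖x t - y t‖ = g t := norm_sub_rev _ _
      have hgz : ‖x z - y z‖ = g z := norm_sub_rev _ _
      have hθt : (g t)^(k+1) • (x t - y t) = θ • vt := by
        rw [← hvt, smul_smul, mul_comm, halg t htS]
      have hθz : (g z)^(k+1) • (x z - y z) = θ • vz := by
        rw [← hvz, smul_smul, mul_comm, halg z hzS]
      have hkey0 : (0:ℝ) ≤ ⟪(g t)^(k+1) • (x t - y t) - (g z)^(k+1) • (x z - y z),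
          y t - y z⟫ := by
        rw [hθt, hθz, ← smul_sub, real_inner_smul_left]
        exact mul_nonneg hθ.le hmono0
      set ε : H := x z - x t - (z - t) • (y t - x t) with hεdef
      have hyd : y t - y z = (z - t) • (x t - y t) - ε - (x t - y t) + (x z - y z) := by
        rw [hεdef]; module
      rw [hyd] at hkey0
      -- scalar abbreviations
      set u : H := x t - y t with hudef
      set w : H := x z - y z with hwdef
      set a := g t with hadef
      set b := g z with hbdef
      set c : ℝ := ⟪w, u⟫ with hcdef
      set eu : ℝ := ⟪u, ε⟫ with heudef
      set ev : ℝ := ⟪w, ε⟫ with hevdef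
      clear_value c eu ev u w
      have hkey1 : (0:ℝ) ≤ (z - t) * (a^(k+1) * a^2 - b^(k+1) * c)
          - (a^(k+1) * eu - b^(k+1) * ev) - (a^(k+1) * a^2 - b^(k+1) * c)
          + (a^(k+1) * c - b^(k+1) * b^2) := by
        have h := hkey0
        simp only [inner_sub_left, inner_sub_right, inner_add_right, real_inner_smul_left,
          real_inner_smul_right, real_inner_self_eq_norm_sq] at h
        rw [real_inner_comm w u] at h
        rw [hgt, hgz] at h
        rw [← hcdef, ← heudef, ← hevdef] at h
        linarith [h]
      -- error estimate
      have hbM : ‖w‖ ≤ M := by rw [hgz]; exact hMle z hzS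
      have haM : ‖u‖ ≤ M := by rw [hgt]; exact hMle t htS
      have hlip := smul_pow_lip k M w u hbM haM
      rw [hgt, hgz, ← hLdef] at hlip
      have hip : b^(k+1) * ev - a^(k+1) * eu
          ≤ ‖(b^(k+1)) • w - (a^(k+1)) • u‖ * ‖ε‖ := by
        have h2 := real_inner_le_norm ((b^(k+1)) • w - (a^(k+1)) • u) ε
        simp only [inner_sub_left, real_inner_smul_left] at h2
        rw [← hevdef, ← heudef] at h2
        exact h2
      have herr : b^(k+1) * ev - a^(k+1) * eu ≤ L * ‖w - u‖ * ‖ε‖ := by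
        refine hip.trans ?_
        exact mul_le_mul_of_nonneg_right hlip (norm_nonneg ε)
      have hd2 : ‖w - u‖^2 = b^2 - 2*c + a^2 := by
        rw [norm_sub_sq_real, hgt, hgz, ← hcdef]
      have hamgm : L * ‖w - u‖ * ‖ε‖ ≤ (q/4) * ‖w - u‖^2 + K * ‖ε‖^2 := by
        have hs := sq_nonneg (q * ‖w - u‖ - 2*L*‖ε‖)
        have h4 : q * (L * ‖w - u‖ * ‖ε‖) ≤ q * ((q/4) * ‖w - u‖^2 + K * ‖ε‖^2) := by
          have he : q * ((q/4) * ‖w - u‖^2 + K * ‖ε‖^2)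
              = (q*‖w - u‖)^2/4 + (K*q)*‖ε‖^2 := by ring
          rw [he, hKq]
          linarith [hs]
        exact le_of_mul_le_mul_left h4 hq0
      have hD : 0 ≤ a^2 + b^2 - 2*c := by
        have := sq_nonneg ‖w - u‖
        rw [hd2] at this
        linarith
      have main : a^(k+1) * a^2 + b^(k+1) * b^2 - (a^(k+1) + b^(k+1)) * c
          ≤ (z - t) * (a^(k+1) * a^2 - b^(k+1) * c) + (q/4) * (a^2 + b^2 - 2*c)
            + K * ‖ε‖^2 := by
        have hd2q : (q/4) * ‖w - u‖^2 = (q/4)*(b^2 - 2*c + a^2) := by rw [hd2]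
        linarith [hkey1, herr, hamgm, hd2q]
      have hqA : q ≤ a^(k+1) := by
        rw [hqdef]; exact pow_le_pow_left₀ hm0.le (hmle t htS) _
      have hAB : a^(k+1) ≤ b^(k+1) := pow_le_pow_left₀ hat0.le hab' _
      have hc : c ≤ a * b := by
        have h3 := real_inner_le_norm w u
        rw [hgt, hgz] at h3
        rw [hcdef]; linarith [h3]
      have hstep := scalar_step a b c (z - t) q (a^(k+1)) (b^(k+1)) (K * ‖ε‖^2)
        hht hh1 hq0 hqA hAB hat0 hab' hc hD main
      -- conclude slope bound
      have hEb : ‖ε‖ ≤ η * (z - t) := by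
        have := hεz hz
        rwa [Real.norm_eq_abs, abs_of_pos hht] at this
      have hE2 : K * ‖ε‖^2 ≤ K * (η * (z - t))^2 := by
        have := pow_le_pow_left₀ (norm_nonneg ε) hEb 2
        exact mul_le_mul_of_nonneg_left this hK0.le
      have hKη : K * η^2 = r * q * m / 2 := by
        rw [hηsq, hKdef]; field_simp
      have hchain : (z - t) * (q * m) * (b - a) ≤ (r/2) * (q * m) * (z - t)^2 := by
        have h1 : (z - t) * (q * m) * (b - a) ≤ (z - t) * (a^(k+1) * a) * (b - a) := by
          have hqm : q * m ≤ a^(k+1) * a :=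
            mul_le_mul hqA (hmle t htS) hm0.le (pow_nonneg hat0.le _)
          have := mul_le_mul_of_nonneg_right (mul_le_mul_of_nonneg_left hqm hht.le)
            (by linarith : (0:ℝ) ≤ b - a)
          linarith
        have h2 : K * (η * (z - t))^2 = (r/2) * (q * m) * (z - t)^2 := by
          have : K * (η * (z - t))^2 = (K * η^2) * (z - t)^2 := by ring
          rw [this, hKη]; ring
        linarith [h1, hstep, hE2, h2.le]
      have hqm0 : 0 < q * m := mul_pos hq0 hm0
      have hba2 : b - a ≤ (r/2) * (z - t) := by
        have hz2 : (z - t) * (q * m) * (b - a) = ((q*m)*(z-t)) * (b - a) := by ring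
        have hz3 : (r/2) * (q * m) * (z - t)^2 = ((q*m)*(z-t)) * ((r/2)*(z-t)) := by ring
        rw [hz2, hz3] at hchain
        exact le_of_mul_le_mul_left hchain (mul_pos hqm0 hht)
      rw [div_lt_iff₀ hht]
      have := mul_pos hr hht
      linarith [hba2]
  -- g is nonincreasing
  have hanti : ∀ s ∈ Icc (0:ℝ) t₀, ∀ t ∈ Icc (0:ℝ) t₀, s ≤ t → g t ≤ g s := by
    intro s hs t ht hst
    have hf : ContinuousOn g (Icc s t₀) := hgc.mono (Icc_subset_Icc hs.1 le_rfl)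
    have := image_le_of_liminf_slope_right_le_deriv_boundary (f := g) (a := s) (b := t₀)
      (B := fun _ => g s) (B' := fun _ => 0) hf le_rfl continuousOn_const
      (fun u _ => hasDerivWithinAt_const u _ (g s))
      (fun u hu r hr => ((key u ⟨hs.1.trans hu.1, hu.2⟩ r hr).frequently))
    exact this ⟨hst, ht.2⟩
  -- conclude monotonicity of lam
  intro s hs t ht hst
  have hg := hanti s hs t ht hst
  have h1 : lam s * (g t)^(k+1) ≤ lam s * (g s)^(k+1) :=
    mul_le_mul_of_nonneg_left (pow_le_pow_left₀ (hgpos t ht).le hg _) (hpos s hs).le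
  have h2 : lam s * (g t)^(k+1) ≤ lam t * (g t)^(k+1) := by
    rw [halg t ht]; rw [halg s hs] at h1; exact h1
  exact le_of_mul_le_mul_right h2 (pow_pos (hgpos t ht) _)
end

section
/- Let p ≥ 1 be an integer and θ > 0, let (x, λ, y) be a global solution of the closed-loop control system on [0, ∞), and let z ∈ H with 0 ∈ A z. Define the Lyapunov function E(t) = ½‖x(t) − z‖². Then for every t ≥ 0, the derivative of E satisfies E'(t) = ⟪x'(t), x(t) − z⟫ ≤ −‖x(t) − y(t)‖². -/
open scoped Pointwise
open RealInnerProductSpace Filter Topology Set Metric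

/-- Along a global solution of the closed-loop control system, for
`z ∈ A⁻¹(0)` the Lyapunov function `E(t) = ½‖x(t) - z‖²` satisfies
`E'(t) = ⟪x'(t), x(t) - z⟫ ≤ -‖x(t) - y(t)‖²`. -/
theorem stmt_7 {H : Type*} [NormedAddCommGroup H] [InnerProductSpace ℝ H] [CompleteSpace H]
    (A : H → Set H)
    (hmono : ∀ x y u v : H, u ∈ A x → v ∈ A y → 0 ≤ ⟪u - v, x - y⟫)
    (p : ℕ) (hp : 1 ≤ p) (θ : ℝ) (hθ : 0 < θ)
    (x : ℝ → H) (lam : ℝ → ℝ) (y : ℝ → H)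
    (hsol : IsCLSolution A p θ (Ici 0) x lam y)
    (z : H) (hz : 0 ∈ A z) :
    ∀ t ∈ Ici (0 : ℝ),
      HasDerivWithinAt (fun s => (1 / 2 : ℝ) * ‖x s - z‖ ^ 2)
          ⟪y t - x t, x t - z⟫ (Ici 0) t
      ∧ ⟪y t - x t, x t - z⟫ ≤ -‖x t - y t‖ ^ 2 := by
  obtain ⟨hlam, hlamc, hres, hderiv, hcont, halg⟩ := hsol
  intro t ht
  constructor
  · -- derivative part
    have hx : HasDerivWithinAt (fun s => x s - z) (y t - x t) (Ici 0) t :=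
      (hderiv t ht).sub_const z
    have h1 : HasDerivWithinAt (fun s => ⟪x s - z, x s - z⟫)
        (⟪x t - z, y t - x t⟫ + ⟪y t - x t, x t - z⟫) (Ici 0) t := hx.inner ℝ hx
    have h2 : HasDerivWithinAt (fun s => (1 / 2 : ℝ) * ⟪x s - z, x s - z⟫)
        ((1 / 2 : ℝ) * (⟪x t - z, y t - x t⟫ + ⟪y t - x t, x t - z⟫)) (Ici 0) t :=
      h1.const_mul _
    have heq : (1 / 2 : ℝ) * (⟪x t - z, y t - x t⟫ + ⟪y t - x t, x t - z⟫)
        = ⟪y t - x t, x t - z⟫ := by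
      rw [real_inner_comm (x t - z)]; ring
    rw [heq] at h2
    convert h2 using 2 with s
    rw [← real_inner_self_eq_norm_sq]
  · -- inequality part
    obtain ⟨u, hu, huv⟩ := hres t ht
    have hmon := hmono (y t) z u 0 hu hz
    have h0 : 0 ≤ ⟪x t - y t, y t - z⟫ := by
      have : x t - y t = lam t • u := huv.symm
      rw [this, real_inner_smul_left]
      simp only [sub_zero] at hmon
      exact mul_nonneg (hlam t ht).le hmon
    have key : ⟪y t - x t, x t - z⟫
        = -‖x t - y t‖ ^ 2 - ⟪x t - y t, y t - z⟫ := by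
      have : x t - z = (x t - y t) + (y t - z) := by abel
      rw [this, inner_add_right]
      have : (y t - x t : H) = -(x t - y t) := by abel
      rw [this, inner_neg_left, inner_neg_left, real_inner_self_eq_norm_sq]
      ring
    rw [key]
    linarith
end

section
/- (Opial lemma, continuous form.) Let S ⊆ H be a nonempty subset and x : [0, ∞) → H a mapping. Assume: (i) for every z ∈ S, the limit lim_{t→+∞} ‖x(t) − z‖ exists in ℝ; and (ii) every weak sequential cluster point of x belongs to S, i.e. whenever tₙ → +∞ and x(tₙ) converges weakly to some x̄ ∈ H (meaning ⟪x(tₙ) − x̄, h⟫ → 0 for every h ∈ H), then x̄ ∈ S. Then there exists x̄ ∈ S such that x(t) converges weakly to x̄ as t → +∞, i.e. ⟪x(t) − x̄, h⟫ → 0 for every h ∈ H. -/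
open RealInnerProductSpace Filter Topology Set Metric

/-! Bounded sequences in a Hilbert space have weakly convergent subsequences (sequential
Banach–Alaoglu in the dual of the separable closed span of the sequence, then Riesz). Since
`‖x t - z₀‖` converges, `x` is bounded along every sequence `tₙ → ∞`, so every such sequence has a
subsequence converging weakly to a point of `S`. Two such points `z₁, z₂` coincide:
`⟪x t, z₂ - z₁⟫` is an affine combination of `‖x t - z₁‖²` and `‖x t - z₂‖²`, hence converges, and
its limits along the two sequences are `⟪z₁, z₂ - z₁⟫` and `⟪z₂, z₂ - z₁⟫`. Hence every sequence
`tₙ → ∞` has a subsequence along which `x` converges weakly to one and the same point. -/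

theorem isBounded_range_of_tendsto_dist {X : Type*} [PseudoMetricSpace X] {u : ℕ → X} {z : X}
    {r : ℝ} (hu : Tendsto (fun n => dist (u n) z) atTop (𝓝 r)) : Bornology.IsBounded (range u) := by
  obtain ⟨C, hC⟩ := isBounded_iff_forall_norm_le.1 (isBounded_range_of_tendsto _ hu)
  refine (isBounded_closedBall (x := z) (r := C)).subset ?_
  rintro _ ⟨n, rfl⟩
  exact (le_abs_self _).trans (hC _ (mem_range_self n))

section

variable {H : Type*} [NormedAddCommGroup H] [InnerProductSpace ℝ H]

def TendstoWeakly {α : Type*} (f : α → H) (l : Filter α) (a : H) : Prop :=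
  ∀ h : H, Tendsto (fun t => ⟪f t - a, h⟫) l (𝓝 0)

theorem exists_strictMono_tendstoWeakly_of_isBounded [CompleteSpace H] {u : ℕ → H}
    (hu : Bornology.IsBounded (range u)) :
    ∃ a : H, ∃ φ : ℕ → ℕ, StrictMono φ ∧ TendstoWeakly (u ∘ φ) atTop a := by
  obtain ⟨C, hC⟩ := isBounded_iff_forall_norm_le.1 hu
  set K : Submodule ℝ H := (Submodule.span ℝ (range u)).topologicalClosure
  have : TopologicalSpace.SeparableSpace K :=
    ((countable_range u).isSeparable.span (R := ℝ)).closure.separableSpace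
  have : CompleteSpace K := (Submodule.isClosed_topologicalClosure _).completeSpace_coe
  let uK : ℕ → K := fun n =>
    ⟨u n, Submodule.le_topologicalClosure _ (Submodule.subset_span (mem_range_self n))⟩
  let w : ℕ → WeakDual ℝ K := fun n => StrongDual.toWeakDual (innerSL ℝ (uK n))
  obtain ⟨f, -, φ, hφ, hw⟩ := WeakDual.isSeqCompact_closedBall (𝕜 := ℝ) (E := K) 0 C
    (x := w) fun n => by simpa [w] using hC _ (mem_range_self n)
  let a : K := (InnerProductSpace.toDual ℝ K).symm (WeakDual.toStrongDual f)
  refine ⟨a, φ, hφ, fun h => ?_⟩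
  have hlim := ((WeakDual.eval_continuous (K.orthogonalProjectionOnto h)).tendsto f).comp hw
  have : ⟪a, K.orthogonalProjectionOnto h⟫ = f (K.orthogonalProjectionOnto h) :=
    InnerProductSpace.toDual_symm_apply
  rw [← sub_self (f _)]
  refine (hlim.sub_const _).congr fun n => ?_
  simp [w, uK, ← this, inner_sub_left]

theorem TendstoWeakly.tendsto_inner {α : Type*} {f : α → H} {l : Filter α} {a : H}
    (hf : TendstoWeakly f l a) (h : H) : Tendsto (fun t => ⟪f t, h⟫) l (𝓝 ⟪a, h⟫) := by
  simpa [inner_sub_left] using (hf h).add_const ⟪a, h⟫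

theorem eq_of_tendstoWeakly_of_tendsto_norm_sub {α : Type*} {x : α → H} {l : Filter α}
    {z₁ z₂ : H} {r₁ r₂ : ℝ} (h₁ : Tendsto (fun t => ‖x t - z₁‖) l (𝓝 r₁))
    (h₂ : Tendsto (fun t => ‖x t - z₂‖) l (𝓝 r₂)) {s t : ℕ → α}
    (hs : Tendsto s atTop l) (ht : Tendsto t atTop l)
    (hs₁ : TendstoWeakly (x ∘ s) atTop z₁) (ht₂ : TendstoWeakly (x ∘ t) atTop z₂) : z₁ = z₂ := by
  have polarization : ∀ τ, ⟪x τ, z₂ - z₁⟫ =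
      (‖x τ - z₁‖ ^ 2 - ‖x τ - z₂‖ ^ 2 - ‖z₁‖ ^ 2 + ‖z₂‖ ^ 2) / 2 := by
    intro τ
    rw [norm_sub_sq_real, norm_sub_sq_real, inner_sub_right]
    ring
  have hconv : Tendsto (fun τ => ⟪x τ, z₂ - z₁⟫) l
      (𝓝 ((r₁ ^ 2 - r₂ ^ 2 - ‖z₁‖ ^ 2 + ‖z₂‖ ^ 2) / 2)) := by
    simp_rw [polarization]
    exact ((((h₁.pow 2).sub (h₂.pow 2)).sub_const _).add_const _).div_const 2
  have e₁ := tendsto_nhds_unique (hs₁.tendsto_inner (z₂ - z₁)) (hconv.comp hs)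
  have e₂ := tendsto_nhds_unique (ht₂.tendsto_inner (z₂ - z₁)) (hconv.comp ht)
  have : ⟪z₂ - z₁, z₂ - z₁⟫ = 0 := by rw [inner_sub_left, e₁, e₂, sub_self]
  exact (sub_eq_zero.1 (inner_self_eq_zero.1 this)).symm

end

/-- **Opial lemma, continuous form.** If for every `z ∈ S` the limit
`lim_{t→∞} ‖x(t) - z‖` exists, and every weak sequential cluster point of `x` belongs
to `S`, then `x(t)` converges weakly to some `xbar ∈ S` as `t → +∞`. -/
theorem stmt_9 {H : Type*} [NormedAddCommGroup H] [InnerProductSpace ℝ H] [CompleteSpace H]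
    (S : Set H) (hS : S.Nonempty) (x : ℝ → H)
    (h1 : ∀ z ∈ S, ∃ l : ℝ, Tendsto (fun t => ‖x t - z‖) atTop (nhds l))
    (h2 : ∀ (t : ℕ → ℝ) (xbar : H), Tendsto t atTop atTop →
      (∀ h : H, Tendsto (fun n => ⟪x (t n) - xbar, h⟫) atTop (nhds 0)) → xbar ∈ S) :
    ∃ xbar ∈ S, ∀ h : H, Tendsto (fun t => ⟪x t - xbar, h⟫) atTop (nhds 0) := by
  obtain ⟨z₀, hz₀⟩ := hS
  obtain ⟨r₀, hr₀⟩ := h1 z₀ hz₀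
  have cluster : ∀ ns : ℕ → ℝ, Tendsto ns atTop atTop →
      ∃ φ : ℕ → ℕ, ∃ y ∈ S,
        Tendsto (ns ∘ φ) atTop atTop ∧ TendstoWeakly (x ∘ ns ∘ φ) atTop y := by
    intro ns hns
    have hbdd : Bornology.IsBounded (range (x ∘ ns)) := isBounded_range_of_tendsto_dist
      (by simpa only [dist_eq_norm, Function.comp_def] using hr₀.comp hns)
    obtain ⟨y, φ, hφ, hy⟩ := exists_strictMono_tendstoWeakly_of_isBounded hbdd
    have hnsφ := hns.comp hφ.tendsto_atTop
    exact ⟨φ, y, h2 _ y hnsφ hy, hnsφ, hy⟩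
  obtain ⟨_, xbar, hxbar, hφ, hx⟩ := cluster (↑) tendsto_natCast_atTop_atTop
  refine ⟨xbar, hxbar, fun h => tendsto_of_subseq_tendsto fun ns hns => ?_⟩
  obtain ⟨ψ, y, hy, hψ, hxy⟩ := cluster ns hns
  obtain ⟨r, hr⟩ := h1 xbar hxbar
  obtain ⟨r', hr'⟩ := h1 y hy
  obtain rfl := eq_of_tendstoWeakly_of_tendsto_norm_sub hr hr' hφ hψ hx hxy
  exact ⟨ψ, hxy h⟩
end

section
/- Let p ≥ 1 be an integer and θ > 0, and suppose A is maximal monotone. Let (x, λ, y) be a global solution of the closed-loop control system on [0, ∞) with λ nondecreasing, and assume A⁻¹(0) = {x : 0 ∈ A x} has nonempty interior, i.e. there exist x* ∈ H and δ > 0 such that the closed ball {u : ‖u − x*‖ ≤ δ} is contained in A⁻¹(0). Then there exists x̄ ∈ A⁻¹(0) such that x(t) converges strongly to x̄: ‖x(t) − x̄‖ → 0 as t → +∞. -/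
open scoped Pointwise
open RealInnerProductSpace Filter Topology Set Metric

/-- If `A` is maximal monotone and `A⁻¹(0)` has nonempty interior, the
trajectory of a global solution of the closed-loop control system converges strongly to
some zero of `A`. -/
theorem stmt_10 {H : Type*} [NormedAddCommGroup H] [InnerProductSpace ℝ H] [CompleteSpace H]
    (A : H → Set H)
    (hmono : ∀ x y u v : H, u ∈ A x → v ∈ A y → 0 ≤ ⟪u - v, x - y⟫)
    (hmax : ∀ v x : H, (∀ z u : H, u ∈ A z → 0 ≤ ⟪v - u, x - z⟫) → v ∈ A x)
    (p : ℕ) (hp : 1 ≤ p) (θ : ℝ) (hθ : 0 < θ)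
    (x : ℝ → H) (lam : ℝ → ℝ) (y : ℝ → H)
    (hsol : IsCLSolution A p θ (Ici 0) x lam y)
    (hlam : MonotoneOn lam (Ici 0))
    (hint : ∃ (xstar : H) (δ : ℝ), 0 < δ ∧ ∀ u : H, ‖u - xstar‖ ≤ δ → 0 ∈ A u) :
    ∃ xbar : H, 0 ∈ A xbar ∧ Tendsto (fun t => ‖x t - xbar‖) atTop (nhds 0) := by
  obtain ⟨hlpos, hlcont, hinc, hderiv, hycont, halg⟩ := hsol
  obtain ⟨xs, δ, hδ, hball⟩ := hint
  have hxcont : ContinuousOn x (Ici 0) := fun t ht => (hderiv t ht).continuousWithinAt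
  set ψ : ℝ → ℝ := fun t => ‖y t - x t‖ with hψdef
  have hψcont : ContinuousOn ψ (Ici 0) := hycont.norm
  have hψnn : ∀ t, 0 ≤ ψ t := fun t => norm_nonneg _
  set φ : ℝ → ℝ := fun t => ⟪x t - xs, x t - xs⟫ with hφdef
  have hφnn : ∀ t, 0 ≤ φ t := fun t => real_inner_self_nonneg
  -- the key monotonicity consequence: for all admissible z,  ⟪x t - y t, y t - z⟫ ≥ 0
  have hmono' : ∀ t ∈ Ici (0:ℝ), ∀ z : H, ‖z - xs‖ ≤ δ →
      0 ≤ ⟪x t - y t, y t - z⟫ := by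
    intro t ht z hz
    obtain ⟨a, ha, hae⟩ := Set.mem_smul_set.mp (hinc t ht)
    have h0 := hmono (y t) z a 0 ha (hball z hz)
    rw [sub_zero] at h0
    rw [← hae, real_inner_smul_left]
    exact mul_nonneg (hlpos t ht).le h0
  -- key inequality:  ⟪y t - x t, x t - xs⟫ ≤ -(δ * ψ t)
  have hkey : ∀ t ∈ Ici (0:ℝ), ⟪y t - x t, x t - xs⟫ ≤ -(δ * ψ t) := by
    intro t ht
    have hstep : δ * ψ t ≤ ⟪x t - y t, y t - xs⟫ := by
      by_cases hxy : y t = x t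
      · simp [hψdef, hxy]
      · set v := x t - y t with hv
        have hvne : v ≠ 0 := sub_ne_zero.mpr (fun h => hxy h.symm)
        have hvpos : 0 < ‖v‖ := norm_pos_iff.mpr hvne
        have hz : ‖(xs + (δ / ‖v‖) • v) - xs‖ ≤ δ := by
          rw [add_sub_cancel_left, norm_smul, Real.norm_eq_abs,
            abs_of_nonneg (by positivity), div_mul_cancel₀ _ hvpos.ne']
        have h0 := hmono' t ht (xs + (δ / ‖v‖) • v) hz
        have hexp : ⟪v, y t - (xs + (δ / ‖v‖) • v)⟫
            = ⟪v, y t - xs⟫ - δ * ‖v‖ := by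
          rw [show y t - (xs + (δ / ‖v‖) • v) = (y t - xs) - (δ / ‖v‖) • v by abel,
            inner_sub_right, real_inner_smul_right, real_inner_self_eq_norm_mul_norm]
          field_simp
        rw [hexp] at h0
        have hψv : ψ t = ‖v‖ := by rw [hψdef]; exact (norm_sub_rev _ _)
        rw [hψv]
        linarith
    have hexpand : ⟪y t - x t, x t - xs⟫
        = -⟪x t - y t, x t - y t⟫ - ⟪x t - y t, y t - xs⟫ := by
      have : x t - xs = (x t - y t) + (y t - xs) := by abel
      rw [this, show y t - x t = -(x t - y t) by abel, inner_neg_left, inner_add_right]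
      ring
    have hsq : 0 ≤ ⟪x t - y t, x t - y t⟫ := real_inner_self_nonneg
    rw [hexpand]
    linarith
  -- derivative of φ
  have hφderiv : ∀ t ∈ Ici (0:ℝ),
      HasDerivWithinAt φ (2 * ⟪y t - x t, x t - xs⟫) (Ici 0) t := by
    intro t ht
    have h1 : HasDerivWithinAt (fun r => x r - xs) (y t - x t) (Ici 0) t :=
      (hderiv t ht).sub_const xs
    have h2 := h1.inner ℝ h1
    have : ⟪x t - xs, y t - x t⟫ + ⟪y t - x t, x t - xs⟫
        = 2 * ⟪y t - x t, x t - xs⟫ := by rw [real_inner_comm]; ring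
    rwa [this] at h2
  have hφcont : ContinuousOn φ (Ici 0) :=
    (hxcont.sub continuousOn_const).inner (hxcont.sub continuousOn_const)
  have hInnerCont : ContinuousOn (fun r => 2 * ⟪y r - x r, x r - xs⟫) (Ici 0) :=
    continuousOn_const.mul (hycont.inner (hxcont.sub continuousOn_const))
  -- FTC for φ
  have FTCφ : ∀ s t : ℝ, 0 ≤ s → s ≤ t →
      (∫ r in s..t, 2 * ⟪y r - x r, x r - xs⟫) = φ t - φ s := by
    intro s t hs hst
    have hsub : Icc s t ⊆ Ici 0 := fun r hr => le_trans hs hr.1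
    apply intervalIntegral.integral_eq_sub_of_hasDeriv_right_of_le hst
      (hφcont.mono hsub)
    · intro r hr
      exact (hφderiv r (le_trans hs hr.1.le)).mono
        (fun u hu => le_trans (le_trans hs hr.1.le) (le_of_lt hu))
    · rw [intervalIntegrable_iff_integrableOn_Icc_of_le hst]
      exact (hInnerCont.mono hsub).integrableOn_compact isCompact_Icc
  -- FTC for x
  have FTCx : ∀ s t : ℝ, 0 ≤ s → s ≤ t →
      (∫ r in s..t, (y r - x r)) = x t - x s := by
    intro s t hs hst
    have hsub : Icc s t ⊆ Ici 0 := fun r hr => le_trans hs hr.1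
    apply intervalIntegral.integral_eq_sub_of_hasDeriv_right_of_le hst
      (hxcont.mono hsub)
    · intro r hr
      exact (hderiv r (le_trans hs hr.1.le)).mono
        (fun u hu => le_trans (le_trans hs hr.1.le) (le_of_lt hu))
    · rw [intervalIntegrable_iff_integrableOn_Icc_of_le hst]
      exact (hycont.mono hsub).integrableOn_compact isCompact_Icc
  -- main integral estimate
  have hψint : ∀ s t : ℝ, 0 ≤ s → s ≤ t →
      2 * δ * (∫ r in s..t, ψ r) ≤ φ s - φ t := by
    intro s t hs hst
    have hsub : Icc s t ⊆ Ici 0 := fun r hr => le_trans hs hr.1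
    have hsubu : uIcc s t ⊆ Ici 0 := by rwa [uIcc_of_le hst]
    have hψii : IntervalIntegrable ψ MeasureTheory.volume s t :=
      (hψcont.mono hsubu).intervalIntegrable
    have hgii : IntervalIntegrable (fun r => -(2 * ⟪y r - x r, x r - xs⟫))
        MeasureTheory.volume s t :=
      ((hInnerCont.mono hsubu).neg).intervalIntegrable
    have hmono2 : (∫ r in s..t, 2 * δ * ψ r) ≤
        ∫ r in s..t, -(2 * ⟪y r - x r, x r - xs⟫) := by
      apply intervalIntegral.integral_mono_on hst
        (hψii.const_mul (2*δ)) hgii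
      intro r hr
      have hk := hkey r (hsub hr)
      nlinarith [hδ, hψnn r]
    rw [intervalIntegral.integral_const_mul] at hmono2
    rw [intervalIntegral.integral_neg, FTCφ s t hs hst] at hmono2
    linarith
  -- distance estimate
  have hdist : ∀ s t : ℝ, 0 ≤ s → s ≤ t →
      ‖x t - x s‖ ≤ (φ s - φ t) / (2 * δ) := by
    intro s t hs hst
    have h1 : ‖x t - x s‖ ≤ ∫ r in s..t, ψ r := by
      rw [← FTCx s t hs hst]
      exact intervalIntegral.norm_integral_le_integral_norm hst
    have h2 := hψint s t hs hst
    rw [le_div_iff₀ (by positivity)]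
    nlinarith
  -- φ is antitone on [0,∞)
  have hφanti : ∀ s t : ℝ, 0 ≤ s → s ≤ t → φ t ≤ φ s := by
    intro s t hs hst
    have h := hψint s t hs hst
    have hnn : 0 ≤ ∫ r in s..t, ψ r :=
      intervalIntegral.integral_nonneg hst (fun r _ => hψnn r)
    nlinarith
  -- the limiting value of φ
  set Φ : ℝ → ℝ := fun t => φ (max t 0) with hΦdef
  have hΦanti : Antitone Φ := by
    intro s t hst
    exact hφanti (max s 0) (max t 0) (le_max_right _ _)
      (max_le_max hst le_rfl)
  have hΦbdd : BddBelow (range Φ) :=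
    ⟨0, fun v ⟨t, ht⟩ => ht ▸ hφnn _⟩
  have hΦtends : Tendsto Φ atTop (𝓝 (⨅ t, Φ t)) := tendsto_atTop_ciInf hΦanti hΦbdd
  set L : ℝ := ⨅ t, Φ t with hLdef
  have hLle : ∀ t : ℝ, L ≤ Φ t := fun t => ciInf_le hΦbdd t
  -- x (max · 0) is a Cauchy "sequence"
  set X : ℝ → H := fun t => x (max t 0) with hXdef
  have hcauchy : CauchySeq X := by
    apply cauchySeq_of_le_tendsto_0 (fun N => (Φ N - L) / (2 * δ))
    · intro n m N hn hm
      have key : ∀ a b : ℝ, a ≤ b → N ≤ a → dist (X a) (X b) ≤ (Φ N - L) / (2 * δ) := by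
        intro a b hab hNa
        have h1 : dist (X a) (X b) ≤ (φ (max a 0) - φ (max b 0)) / (2 * δ) := by
          rw [dist_eq_norm, norm_sub_rev]
          exact hdist (max a 0) (max b 0) (le_max_right _ _) (max_le_max hab le_rfl)
        have h2 : φ (max a 0) ≤ Φ N := hΦanti hNa
        have h3 : L ≤ φ (max b 0) := by
          have := hLle b; rwa [hΦdef] at this
        refine le_trans h1 ?_
        apply div_le_div_of_nonneg_right _ (by positivity)
        · linarith
      rcases le_total n m with h | h
      · exact key n m h hn
      · rw [dist_comm]; exact key m n h hm
    · have : Tendsto (fun N => (Φ N - L) / (2 * δ)) atTop (𝓝 ((L - L) / (2 * δ))) :=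
        (hΦtends.sub tendsto_const_nhds).div_const _
      simpa using this
  obtain ⟨xbar, hXlim⟩ := cauchySeq_tendsto_of_complete hcauchy
  have hxlim : Tendsto x atTop (𝓝 xbar) := by
    apply hXlim.congr'
    filter_upwards [eventually_ge_atTop (0:ℝ)] with t ht
    rw [hXdef]; simp [max_eq_left ht]
  refine ⟨xbar, ?_, tendsto_iff_norm_sub_tendsto_zero.mp hxlim⟩
  -- find times where the velocity is small
  have hfreq : ∀ ε : ℝ, 0 < ε → ∀ T : ℝ, 0 ≤ T → ∃ s, T ≤ s ∧ ψ s < ε := by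
    intro ε hε T hT
    by_contra hc
    push_neg at hc
    set t' : ℝ := T + φ T / (2 * δ * ε) + 1 with ht'def
    have hTt' : T ≤ t' := by
      have h : 0 ≤ φ T / (2 * δ * ε) := div_nonneg (hφnn T) (by positivity)
      rw [ht'def]
      linarith
    have hsubu : uIcc T t' ⊆ Ici 0 := by
      rw [uIcc_of_le hTt']; exact fun r hr => le_trans hT hr.1
    have h1 : 2 * δ * (∫ r in T..t', ψ r) ≤ φ T := by
      have := hψint T t' hT hTt'
      have := hφnn t'
      linarith
    have h2 : (∫ r in T..t', (ε:ℝ)) ≤ ∫ r in T..t', ψ r := by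
      apply intervalIntegral.integral_mono_on hTt' intervalIntegrable_const
        ((hψcont.mono hsubu).intervalIntegrable)
      intro r hr
      exact hc r hr.1
    rw [intervalIntegral.integral_const, smul_eq_mul] at h2
    have ht'sub : t' - T = φ T / (2 * δ * ε) + 1 := by rw [ht'def]; ring
    have hcancel : (2 * δ * ε) * (φ T / (2 * δ * ε)) = φ T :=
      mul_div_cancel₀ _ (by positivity)
    have h3 : 2 * δ * ((t' - T) * ε) ≤ 2 * δ * (∫ r in T..t', ψ r) :=
      mul_le_mul_of_nonneg_left h2 (by positivity)
    have h4 : 2 * δ * ((t' - T) * ε) = φ T + 2 * δ * ε := by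
      rw [ht'sub]; linear_combination hcancel
    nlinarith [mul_pos hδ hε]
  have hseq : ∀ n : ℕ, ∃ s, (n:ℝ) ≤ s ∧ ψ s < 1 / (n + 1) := by
    intro n
    exact hfreq (1 / (n + 1)) (by positivity) n (Nat.cast_nonneg n)
  choose ts hts hψts using hseq
  have hts0 : ∀ n, (0:ℝ) ≤ ts n := fun n => le_trans (Nat.cast_nonneg n) (hts n)
  have htsTop : Tendsto ts atTop atTop :=
    tendsto_atTop_mono hts tendsto_natCast_atTop_atTop
  have hψ0 : Tendsto (fun n => ψ (ts n)) atTop (𝓝 0) := by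
    apply squeeze_zero (fun n => hψnn _) (fun n => (hψts n).le)
    exact tendsto_one_div_add_atTop_nhds_zero_nat
  have hxts : Tendsto (fun n => x (ts n)) atTop (𝓝 xbar) := hxlim.comp htsTop
  have hyx0 : Tendsto (fun n => y (ts n) - x (ts n)) atTop (𝓝 0) :=
    tendsto_zero_iff_norm_tendsto_zero.mpr hψ0
  have hyts : Tendsto (fun n => y (ts n)) atTop (𝓝 xbar) := by
    have := hyx0.add hxts
    simpa using this
  -- the resolvent elements
  have hmem := fun n => Set.mem_smul_set.mp (hinc (ts n) (hts0 n))
  choose a ha hae using hmem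
  have hlam0 : 0 < lam 0 := hlpos 0 self_mem_Ici
  have ha0 : Tendsto a atTop (𝓝 0) := by
    rw [tendsto_zero_iff_norm_tendsto_zero]
    apply squeeze_zero (fun n => norm_nonneg _) (fun n => ?_)
      (by simpa using hψ0.div_const (lam 0))
    have hlamn : lam 0 ≤ lam (ts n) := hlam self_mem_Ici (hts0 n) (hts0 n)
    have hlampos : 0 < lam (ts n) := hlpos _ (hts0 n)
    have h1 : lam (ts n) * ‖a n‖ = ψ (ts n) := by
      show lam (ts n) * ‖a n‖ = ‖y (ts n) - x (ts n)‖
      rw [← norm_sub_rev (x (ts n)), ← hae n, norm_smul, Real.norm_eq_abs,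
        abs_of_pos hlampos]
    rw [div_eq_inv_mul]
    calc ‖a n‖ = (lam (ts n))⁻¹ * ψ (ts n) := by
          rw [← h1]; field_simp
      _ ≤ (lam 0)⁻¹ * ψ (ts n) := by
          apply mul_le_mul_of_nonneg_right _ (hψnn _)
          exact inv_anti₀ hlam0 hlamn
  refine hmax 0 xbar fun z u hu => ?_
  have hn : ∀ n, 0 ≤ ⟪a n - u, y (ts n) - z⟫ :=
    fun n => hmono (y (ts n)) z (a n) u (ha n) hu
  have hlimI : Tendsto (fun n => ⟪a n - u, y (ts n) - z⟫) atTop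
      (𝓝 ⟪(0:H) - u, xbar - z⟫) :=
    (ha0.sub tendsto_const_nhds).inner (hyts.sub tendsto_const_nhds)
  exact ge_of_tendsto' hlimI hn
end

section
/- Let σ ∈ (0, 1) and let sequences generated by the conceptual algorithmic framework be given. Then for every integer k ≥ 1, every z ∈ H, and every v ∈ A z: ∑_{i=1}^k λ_i ⟪v, y_i − z⟫ + ((1 − σ²)/2)·∑_{i=1}^k ‖x_{i−1} − y_i‖² ≤ ½‖x_0 − z‖² − ½‖x_k − z‖². In particular, with the ergodic iterate ỹ_k = (∑_{i=1}^k λ_i)^{-1} ∑_{i=1}^k λ_i y_i, one has sup_{v ∈ A z} ⟪v, ỹ_k − z⟫ ≤ ½‖x_0 − z‖²/(∑_{i=1}^k λ_i), and for any z* with 0 ∈ A z*, ∑_{i=1}^k ‖x_{i−1} − y_i‖² ≤ ‖x_0 − z*‖²/(1 − σ²). -/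
open scoped Pointwise
open RealInnerProductSpace Filter Topology Set Metric

/-- Sequences generated by the conceptual algorithmic framework: for all `k ≥ 0`,
`v_{k+1}` lies in the `ε_{k+1}`-enlargement `A^{ε_{k+1}}(y_{k+1})`, the relative error
condition `‖λ_{k+1} v_{k+1} + y_{k+1} - x_k‖² + 2 λ_{k+1} ε_{k+1} ≤ σ² ‖y_{k+1} - x_k‖²`
holds, and `x_{k+1} = x_k - λ_{k+1} v_{k+1}`. -/
def CAF {H : Type*} [NormedAddCommGroup H] [InnerProductSpace ℝ H]
    (A : H → Set H) (σ : ℝ) (x y v : ℕ → H) (lam eps : ℕ → ℝ) : Prop :=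
  ∀ k : ℕ,
    0 < lam (k + 1) ∧ 0 ≤ eps (k + 1) ∧
    (∀ xt vt : H, vt ∈ A xt → -(eps (k + 1)) ≤ ⟪y (k + 1) - xt, v (k + 1) - vt⟫) ∧
    ‖lam (k + 1) • v (k + 1) + y (k + 1) - x k‖ ^ 2 + 2 * lam (k + 1) * eps (k + 1)
      ≤ σ ^ 2 * ‖y (k + 1) - x k‖ ^ 2 ∧
    x (k + 1) = x k - lam (k + 1) • v (k + 1)

/-- Descent estimate for the conceptual algorithmic framework, with its
ergodic-gap and summability consequences. -/
theorem stmt_15 {H : Type*} [NormedAddCommGroup H] [InnerProductSpace ℝ H] [CompleteSpace H]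
    (A : H → Set H)
    (hmono : ∀ x y u v : H, u ∈ A x → v ∈ A y → 0 ≤ ⟪u - v, x - y⟫)
    (hmax : ∀ v x : H, (∀ z u : H, u ∈ A z → 0 ≤ ⟪v - u, x - z⟫) → v ∈ A x)
    (σ : ℝ) (hσ : σ ∈ Set.Ioo (0 : ℝ) 1)
    (x y v : ℕ → H) (lam eps : ℕ → ℝ)
    (hCAF : CAF A σ x y v lam eps)
    (k : ℕ) (hk : 1 ≤ k) :
    (∀ z w : H, w ∈ A z →
        (∑ i ∈ Finset.Icc 1 k, lam i * ⟪w, y i - z⟫)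
          + ((1 - σ ^ 2) / 2) * ∑ i ∈ Finset.Icc 1 k, ‖x (i - 1) - y i‖ ^ 2
        ≤ (1 / 2) * ‖x 0 - z‖ ^ 2 - (1 / 2) * ‖x k - z‖ ^ 2)
    ∧ (∀ z w : H, w ∈ A z →
        ⟪w, ((∑ i ∈ Finset.Icc 1 k, lam i)⁻¹ • ∑ i ∈ Finset.Icc 1 k, lam i • y i) - z⟫
          ≤ (1 / 2) * ‖x 0 - z‖ ^ 2 / ∑ i ∈ Finset.Icc 1 k, lam i)
    ∧ (∀ zstar : H, 0 ∈ A zstar →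
        ∑ i ∈ Finset.Icc 1 k, ‖x (i - 1) - y i‖ ^ 2 ≤ ‖x 0 - zstar‖ ^ 2 / (1 - σ ^ 2)) := by
  obtain ⟨hσ0, hσ1⟩ := hσ
  have hσ2 : σ ^ 2 < 1 := by nlinarith
  -- one-step estimate
  have step : ∀ z w : H, w ∈ A z → ∀ j : ℕ,
      lam (j+1) * ⟪w, y (j+1) - z⟫ + ((1 - σ ^ 2)/2) * ‖x j - y (j+1)‖ ^ 2
        ≤ (1/2) * ‖x j - z‖ ^ 2 - (1/2) * ‖x (j+1) - z‖ ^ 2 := by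
    intro z w hw j
    obtain ⟨hl, he, henl, herr, hx⟩ := hCAF j
    set l := lam (j+1) with hldef
    set ε := eps (j+1) with hedef
    set vv := v (j+1) with hvdef
    set yy := y (j+1) with hydef
    set a := x j with hadef
    have habs : ‖l‖ = l := by rw [Real.norm_eq_abs, abs_of_pos hl]
    have hexp : ‖l • vv + yy - a‖ ^ 2
        = l ^ 2 * ‖vv‖ ^ 2 + 2 * (l * ⟪vv, yy - a⟫) + ‖yy - a‖ ^ 2 := by
      have h1 : l • vv + yy - a = l • vv + (yy - a) := by abel
      rw [h1, norm_add_sq_real, real_inner_smul_left, norm_smul, habs]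
      ring
    have hB : (1/2) * ‖a - z‖ ^ 2 - (1/2) * ‖x (j+1) - z‖ ^ 2
        = l * ⟪vv, a - z⟫ - (1/2) * (l ^ 2 * ‖vv‖ ^ 2) := by
      have h1 : a - l • vv - z = (a - z) - l • vv := by abel
      have hsq := norm_sub_sq_real (a - z) (l • vv)
      rw [hx, h1, hsq, real_inner_smul_right, norm_smul, habs, real_inner_comm]
      ring
    have hC : -ε ≤ ⟪vv, yy - z⟫ - ⟪w, yy - z⟫ := by
      have h := henl z w hw
      have heq : ⟪yy - z, vv - w⟫ = ⟪vv, yy - z⟫ - ⟪w, yy - z⟫ := by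
        rw [inner_sub_right, real_inner_comm (yy - z) vv, real_inner_comm (yy - z) w]
      linarith [h.trans_eq heq]
    have hsplit : ⟪vv, yy - z⟫ = ⟪vv, yy - a⟫ + ⟪vv, a - z⟫ := by
      have h1 : yy - z = (yy - a) + (a - z) := by abel
      rw [h1, inner_add_right]
    have hrev : ‖a - yy‖ ^ 2 = ‖yy - a‖ ^ 2 := by rw [norm_sub_rev]
    rw [hexp] at herr
    rw [hsplit] at hC
    have hmul := mul_le_mul_of_nonneg_left hC hl.le
    rw [hB, hrev]
    nlinarith [hmul, herr, hl]
  -- summed estimate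
  have main : ∀ z w : H, w ∈ A z →
      (∑ i ∈ Finset.Icc 1 k, lam i * ⟪w, y i - z⟫)
        + ((1 - σ ^ 2) / 2) * ∑ i ∈ Finset.Icc 1 k, ‖x (i - 1) - y i‖ ^ 2
      ≤ (1 / 2) * ‖x 0 - z‖ ^ 2 - (1 / 2) * ‖x k - z‖ ^ 2 := by
    intro z w hw
    have h1 : (∑ i ∈ Finset.Icc 1 k, lam i * ⟪w, y i - z⟫)
        + ((1 - σ ^ 2) / 2) * ∑ i ∈ Finset.Icc 1 k, ‖x (i - 1) - y i‖ ^ 2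
        = ∑ j ∈ Finset.range k, (lam (j+1) * ⟪w, y (j+1) - z⟫
            + ((1 - σ ^ 2)/2) * ‖x j - y (j+1)‖ ^ 2) := by
      rw [Finset.sum_add_distrib, ← Finset.mul_sum,
        ← Finset.Ico_add_one_right_eq_Icc, Finset.sum_Ico_eq_sum_range,
        Finset.sum_Ico_eq_sum_range]
      simp [add_comm 1, Nat.add_sub_cancel]
    have h2 : ∑ j ∈ Finset.range k, (lam (j+1) * ⟪w, y (j+1) - z⟫
            + ((1 - σ ^ 2)/2) * ‖x j - y (j+1)‖ ^ 2)
        ≤ ∑ j ∈ Finset.range k,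
            ((1/2) * ‖x j - z‖ ^ 2 - (1/2) * ‖x (j+1) - z‖ ^ 2) :=
      Finset.sum_le_sum fun j _ => step z w hw j
    have h3 : ∑ j ∈ Finset.range k,
        ((1/2) * ‖x j - z‖ ^ 2 - (1/2) * ‖x (j+1) - z‖ ^ 2)
        = (1/2) * ‖x 0 - z‖ ^ 2 - (1/2) * ‖x k - z‖ ^ 2 :=
      Finset.sum_range_sub' (fun j => (1/2) * ‖x j - z‖ ^ 2) k
    rw [h1]
    rw [h3] at h2
    exact h2
  have hlam : ∀ i : ℕ, 1 ≤ i → 0 < lam i := by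
    intro i hi
    obtain ⟨j, rfl⟩ := Nat.exists_eq_add_of_le hi
    rw [add_comm]
    exact (hCAF j).1
  have hnonneg : (0:ℝ) ≤ ∑ i ∈ Finset.Icc 1 k, ‖x (i - 1) - y i‖ ^ 2 :=
    Finset.sum_nonneg fun i _ => sq_nonneg _
  refine ⟨main, ?_, ?_⟩
  · intro z w hw
    have hS : 0 < ∑ i ∈ Finset.Icc 1 k, lam i :=
      Finset.sum_pos (fun i hi => hlam i (Finset.mem_Icc.mp hi).1)
        (Finset.nonempty_Icc.mpr hk)
    set S := ∑ i ∈ Finset.Icc 1 k, lam i with hSdef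
    have hinner : ⟪w, (S⁻¹ • ∑ i ∈ Finset.Icc 1 k, lam i • y i) - z⟫
        = S⁻¹ * ∑ i ∈ Finset.Icc 1 k, lam i * ⟪w, y i - z⟫ := by
      have hz : (S⁻¹ • ∑ i ∈ Finset.Icc 1 k, lam i • y i) - z
          = S⁻¹ • ∑ i ∈ Finset.Icc 1 k, lam i • (y i - z) := by
        rw [Finset.smul_sum]
        simp only [smul_sub, Finset.sum_sub_distrib]
        rw [← Finset.sum_smul, ← hSdef, Finset.smul_sum]
        rw [smul_smul, inv_mul_cancel₀ hS.ne', one_smul]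
      rw [hz, real_inner_smul_right, inner_sum]
      congr 1
      exact Finset.sum_congr rfl fun i _ => real_inner_smul_right w _ _
    have hsum : ∑ i ∈ Finset.Icc 1 k, lam i * ⟪w, y i - z⟫
        ≤ (1/2) * ‖x 0 - z‖ ^ 2 := by
      have := main z w hw
      nlinarith [sq_nonneg ‖x k - z‖]
    rw [hinner, div_eq_inv_mul]
    exact mul_le_mul_of_nonneg_left hsum (inv_nonneg.mpr hS.le)
  · intro zstar h0
    have := main zstar 0 h0
    simp only [inner_zero_left, mul_zero, Finset.sum_const_zero, zero_add] at this
    rw [le_div_iff₀ (by linarith : (0:ℝ) < 1 - σ ^ 2)]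
    nlinarith [sq_nonneg ‖x k - zstar‖]
end
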